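/- arXiv:1812.01277 — 2 statements merged into one kernel-verified Lean document; each statement's English description precedes it below -/
import Mathlib

section
/- Consider the impulsive SIT system: fix τ > 0, nonnegative release amplitudes (Λ_n)_{n∈ℕ}, and M_S(0) ≥ 0; on each interval (nτ,(n+1)τ], M_S(t) = (τΛ_n + M_S(nτ))·e^{−μ_S(t−nτ)}, and M, F : [0,∞) → ℝ are continuous, nonnegative, and satisfy on each such interval M' = rρ·(F M/(M+γM_S))·e^{−β(M+F)} − μ_M M and F' = (1−r)ρ·(F M/(M+γM_S))·e^{−β(M+F)} − μ_F F. Fix k with 0 < k < μ_F/((1−r)ρ) and suppose that for every n ∈ ℕ, Λ_n ≥ −(1/τ)M_S(nτ) + (1/(γτ))·[((1−k)/k)·e^{(μ_S−μ_M)τ}·M(nτ) + (rρ(1−k)/(μ_M−μ_F+(1−r)ρk))·(e^{(μ_S−μ_F+(1−r)ρk)τ} − e^{(μ_S−μ_M)τ})·F(nτ)]. Then the solution converges exponentially to (0,0), with a convergence rate bounded from below by a positive value independent of the initial condition: there exists ε > 0, independent of the initial data, and C > 0 such that M(t) + F(t) ≤ C e^{−εt} for all t ≥ 0. -/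
open Set Filter Real Topology

lemma gronwall_max3 {u v u' v' : ℝ → ℝ} {K a b : ℝ} (hK : 0 ≤ K)
    (hf : ContinuousOn (fun t => max (max (u t) (v t)) 0) (Set.Icc a b))
    (hu : ∀ x ∈ Set.Ico a b, HasDerivAt u (u' x) x)
    (hv : ∀ x ∈ Set.Ico a b, HasDerivAt v (v' x) x)
    (hbu : ∀ x ∈ Set.Ico a b, u x = max (max (u x) (v x)) 0 →
      u' x ≤ K * max (max (u x) (v x)) 0)
    (hbv : ∀ x ∈ Set.Ico a b, v x = max (max (u x) (v x)) 0 →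
      v' x ≤ K * max (max (u x) (v x)) 0) :
    ∀ x ∈ Set.Icc a b, max (max (u x) (v x)) 0 ≤
      max (max (u a) (v a)) 0 * Real.exp (K * (x - a)) := by
  set f : ℝ → ℝ := fun t => max (max (u t) (v t)) 0 with hfdef
  have hf' : ∀ x ∈ Set.Ico a b, ∀ r, K * f x < r →
      ∃ᶠ z in 𝓝[>] x, (z - x)⁻¹ * (f z - f x) < r := by
    intro x hx r hr
    have hfx0 : (0:ℝ) ≤ f x := le_max_right _ _
    have hr0 : (0:ℝ) < r := lt_of_le_of_lt (by positivity) hr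
    apply Filter.Eventually.frequently
    have hgt : ∀ᶠ z in 𝓝[>] x, x < z := self_mem_nhdsWithin
    have key : ∀ (w : ℝ → ℝ) (w' : ℝ → ℝ), HasDerivAt w (w' x) x → w x ≤ f x →
        (w x = f x → w' x < r) → ∀ᶠ z in 𝓝[>] x, w z - f x < r * (z - x) := by
      intro w w' hd hle hact
      rcases eq_or_lt_of_le hle with heq | hlt
      · have hs : Filter.Tendsto (slope w x) (𝓝[>] x) (𝓝 (w' x)) :=
          (hasDerivAt_iff_tendsto_slope.mp hd).mono_left
            (nhdsWithin_mono x (fun z hz => ne_of_gt hz : Set.Ioi x ⊆ {x}ᶜ))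
        filter_upwards [hs.eventually_lt_const (hact heq), hgt] with z hz hzx
        have hzx' : (0:ℝ) < z - x := by linarith
        rw [slope_def_field, div_lt_iff₀ hzx'] at hz
        calc w z - f x = w z - w x := by rw [heq]
        _ < r * (z - x) := by linarith [hz]
      · have hc : Filter.Tendsto w (𝓝[>] x) (𝓝 (w x)) :=
          (hd.continuousAt.tendsto).mono_left nhdsWithin_le_nhds
        filter_upwards [hc.eventually_lt_const hlt, hgt] with z hz hzx
        have : (0:ℝ) < r * (z - x) := mul_pos hr0 (by linarith)
        linarith
    have E1 := key u u' (hu x hx) (le_trans (le_max_left _ _) (le_max_left _ _))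
      (fun h => lt_of_le_of_lt (hbu x hx h) hr)
    have E2 := key v v' (hv x hx) (le_trans (le_max_right _ _) (le_max_left _ _))
      (fun h => lt_of_le_of_lt (hbv x hx h) hr)
    filter_upwards [E1, E2, hgt] with z h1 h2 hzx
    have hzx' : (0:ℝ) < z - x := by linarith
    rw [inv_mul_lt_iff₀ hzx']
    have h4 : (0:ℝ) < r * (z - x) := mul_pos hr0 hzx'
    have h3 : (0:ℝ) - f x < r * (z - x) := by linarith
    have hfz : f z < r * (z - x) + f x := by
      apply max_lt (max_lt _ _) _ <;> linarith
    nlinarith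
  have key := le_gronwallBound_of_liminf_deriv_right_le hf hf' (le_refl (f a))
    (fun x _ => le_of_eq (add_zero _).symm)
  intro x hx
  have := key x hx
  rwa [gronwallBound_ε0] at this

lemma Tbound {κ K₃ c σ₀ F₀ Fb Mb Mh fv M F D : ℝ}
    (hκ0 : 0 < κ) (hκ1 : κ ≤ 1) (hc : c = (1 - κ)/κ) (hK₃ : K₃ = 1 + κ/σ₀)
    (hσ₀ : 0 < σ₀) (hD : c * Mh ≤ D) (hMh1 : Mb ≤ Mh) (hMh2 : σ₀ * F₀ ≤ Mh)
    (hF₀ : 0 ≤ F₀) (hFb0 : 0 ≤ Fb) (hFbF : Fb ≤ F₀) (hM : 0 ≤ M) (hF : 0 ≤ F)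
    (hfv : 0 ≤ fv) (hu : M - Mb ≤ fv) (hv : F - Fb ≤ fv) (hMb : 0 ≤ Mb) :
    F * M / (M + D) ≤ κ * Fb + K₃ * fv := by
  have hc0 : 0 ≤ c := by rw [hc]; exact div_nonneg (by linarith) hκ0.le
  have hMh0 : 0 ≤ Mh := le_trans (mul_nonneg hσ₀.le hF₀) hMh2
  have hD0 : 0 ≤ D := le_trans (mul_nonneg hc0 hMh0) hD
  have hK₃1 : 1 ≤ K₃ := by
    have := div_nonneg hκ0.le hσ₀.le; rw [hK₃]; linarith
  have hRHS : 0 ≤ κ * Fb + K₃ * fv :=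
    add_nonneg (mul_nonneg hκ0.le hFb0) (mul_nonneg (by linarith) hfv)
  rcases eq_or_lt_of_le (add_nonneg hM hD0) with h0 | hpos
  · rw [← h0, div_zero]; exact hRHS
  rw [div_le_iff₀ hpos]
  have hκc : κ * c = 1 - κ := by rw [hc]; field_simp
  have h3 : (K₃ - 1) * σ₀ = κ := by
    rw [hK₃]; field_simp; ring
  have hcMh0 : 0 ≤ c * Mh := mul_nonneg hc0 hMh0
  have expand : (κ * Fb + K₃ * fv) * (M + c * Mh)
      = κ * (Fb * M) + κ * c * (Fb * Mh) + K₃ * (fv * M) + K₃ * (fv * (c * Mh)) := by ring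
  have hFM : F * M ≤ Fb * M + fv * M := by
    have := mul_le_mul_of_nonneg_right (show F ≤ Fb + fv by linarith) hM
    nlinarith [this]
  have a2 : fv * M ≤ K₃ * (fv * M) := by
    nlinarith [mul_nonneg hfv hM]
  have a3 : (0:ℝ) ≤ K₃ * (fv * (c * Mh)) :=
    mul_nonneg (by linarith) (mul_nonneg hfv hcMh0)
  have hκcFbMh : κ * c * (Fb * Mh) = (1 - κ) * (Fb * Mh) := by rw [hκc]
  have step1 : F * M ≤ (κ * Fb + K₃ * fv) * (M + c * Mh) := by
    rcases le_or_gt M Mh with hMMh | hMMh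
    · have a1 : Fb * M ≤ Fb * Mh := mul_le_mul_of_nonneg_left hMMh hFb0
      have a1' : (1 - κ) * (Fb * M) ≤ (1 - κ) * (Fb * Mh) :=
        mul_le_mul_of_nonneg_left a1 (by linarith)
      rw [expand]; linarith
    · have hMMb : M - Mh ≤ fv := by linarith
      have b1 : σ₀ * Fb ≤ Mh :=
        le_trans (mul_le_mul_of_nonneg_left hFbF hσ₀.le) hMh2
      have h4 : (1 - κ) * Fb ≤ (K₃ - 1) * (c * Mh) := by
        rw [← mul_le_mul_iff_of_pos_right hσ₀]
        have e1 : (K₃ - 1) * (c * Mh) * σ₀ = κ * (c * Mh) := by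
          rw [show (K₃ - 1) * (c * Mh) * σ₀ = (K₃-1) * σ₀ * (c * Mh) by ring, h3]
        have e2 : κ * c * (σ₀ * Fb) ≤ κ * c * Mh :=
          mul_le_mul_of_nonneg_left b1 (mul_nonneg hκ0.le hc0)
        have e3 : κ * c * (σ₀ * Fb) = (1 - κ) * Fb * σ₀ := by rw [hκc]; ring
        rw [e1]; rw [← e3] at *; nlinarith [e2]
      -- (1-κ)(Fb M) ≤ (1-κ)(Fb Mh) + (1-κ) Fb fv
      have c1 : (1 - κ) * (Fb * M) ≤ (1 - κ) * (Fb * Mh) + ((1 - κ) * Fb) * fv := by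
        have : Fb * (M - Mh) ≤ Fb * fv := mul_le_mul_of_nonneg_left hMMb hFb0
        nlinarith [mul_le_mul_of_nonneg_left this (show (0:ℝ) ≤ 1 - κ by linarith)]
      have c2 : ((1 - κ) * Fb) * fv ≤ ((K₃ - 1) * (c * Mh)) * fv :=
        mul_le_mul_of_nonneg_right h4 hfv
      have c3 : K₃ * (fv * (c * Mh)) = ((K₃ - 1) * (c * Mh)) * fv + fv * (c * Mh) := by ring
      have c4 : (0:ℝ) ≤ fv * (c * Mh) := mul_nonneg hfv hcMh0
      rw [expand]; linarith
  calc F * M ≤ (κ * Fb + K₃ * fv) * (M + c * Mh) := step1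
  _ ≤ (κ * Fb + K₃ * fv) * (M + D) := mul_le_mul_of_nonneg_left (by linarith) hRHS

set_option maxHeartbeats 2000000 in
lemma interval_core {r ρ β μM μF γ κ c σ₀ K₃ K L R : ℝ} {MS M F Mb Fb Mh : ℝ → ℝ}
    (hr0 : 0 < r) (hr1 : r < 1) (hρ : 0 < ρ) (hμM : 0 < μM) (hμF : 0 < μF)
    (hβ : 0 < β) (hκ0 : 0 < κ) (hκ1 : κ ≤ 1) (hc : c = (1 - κ)/κ) (hσ₀ : 0 < σ₀)
    (hK₃ : K₃ = 1 + κ/σ₀) (hK : K = ρ * K₃)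
    (hL0 : 0 ≤ L) (hLR : L < R)
    (hMcont : ContinuousOn M (Set.Ici 0)) (hFcont : ContinuousOn F (Set.Ici 0))
    (hMnn : ∀ t, 0 ≤ t → 0 ≤ M t) (hFnn : ∀ t, 0 ≤ t → 0 ≤ F t)
    (hode : ∀ x ∈ Set.Ioo L R,
      HasDerivAt M (r * ρ * (F x * M x / (M x + γ * MS x)) *
        Real.exp (-(β * (M x + F x))) - μM * M x) x ∧
      HasDerivAt F ((1 - r) * ρ * (F x * M x / (M x + γ * MS x)) *
        Real.exp (-(β * (M x + F x))) - μF * F x) x)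
    (hMb' : ∀ x, HasDerivAt Mb (r * ρ * κ * Fb x - μM * Mb x) x)
    (hFb' : ∀ x, HasDerivAt Fb ((1 - r) * ρ * κ * Fb x - μF * Fb x) x)
    (hMbL : Mb L = M L) (hFbL : Fb L = F L)
    (hMb0 : ∀ x ∈ Set.Icc L R, 0 ≤ Mb x) (hFb0 : ∀ x ∈ Set.Icc L R, 0 ≤ Fb x)
    (hFbF₀ : ∀ x ∈ Set.Icc L R, Fb x ≤ F L)
    (hMh1 : ∀ x ∈ Set.Icc L R, Mb x ≤ Mh x)
    (hMh2 : ∀ x ∈ Set.Icc L R, σ₀ * F L ≤ Mh x)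
    (hMS : ∀ x ∈ Set.Ioc L R, c * Mh x ≤ γ * MS x) :
    ∀ t ∈ Set.Ioc L R, M t ≤ Mb t ∧ F t ≤ Fb t := by
  have hFL0 : 0 ≤ F L := hFnn L hL0
  have hK₃1 : 1 ≤ K₃ := by
    have := div_nonneg hκ0.le hσ₀.le; rw [hK₃]; linarith
  have hK0 : 0 ≤ K := by rw [hK]; positivity
  set u : ℝ → ℝ := fun t => M t - Mb t with hu_def
  set v : ℝ → ℝ := fun t => F t - Fb t with hv_def
  set fF : ℝ → ℝ := fun t => max (max (u t) (v t)) 0 with hfF_def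
  have hMbc : Continuous Mb := by
    apply continuous_iff_continuousAt.2 (fun x => (hMb' x).continuousAt)
  have hFbc : Continuous Fb := by
    apply continuous_iff_continuousAt.2 (fun x => (hFb' x).continuousAt)
  have hIccIci : Set.Icc L R ⊆ Set.Ici 0 := fun x hx => le_trans hL0 hx.1
  have hfFcont : ContinuousOn fF (Set.Icc L R) :=
    ContinuousOn.sup
      (ContinuousOn.sup ((hMcont.mono hIccIci).sub hMbc.continuousOn)
        ((hFcont.mono hIccIci).sub hFbc.continuousOn)) continuousOn_const
  have hfF0 : ∀ t, 0 ≤ fF t := fun t => le_max_right _ _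
  have hfFL : fF L = 0 := by
    simp only [hfF_def, hu_def, hv_def, hMbL, hFbL, sub_self]
    simp
  -- key: the Gronwall estimate starting from any z ∈ Ioc L R
  have main : ∀ t ∈ Set.Ioc L R, fF t ≤ 0 := by
    intro t ht
    by_contra hcon
    push_neg at hcon
    -- find z close to L with small fF
    have hPos : 0 < fF t * Real.exp (-(K * (R - L))) :=
      mul_pos hcon (Real.exp_pos _)
    have htendL : Filter.Tendsto fF (𝓝[>] L) (𝓝 0) := by
      have h1 : ContinuousWithinAt fF (Set.Icc L R) L :=
        hfFcont.continuousWithinAt (Set.left_mem_Icc.2 hLR.le)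
      have h2 : ContinuousWithinAt fF (Set.Ioc L R) L := h1.mono Set.Ioc_subset_Icc_self
      have := h2.tendsto
      rw [hfFL] at this
      rwa [nhdsWithin_Ioc_eq_nhdsGT hLR] at this
    have hev1 : ∀ᶠ z in 𝓝[>] L, fF z < fF t * Real.exp (-(K * (R - L))) :=
      htendL.eventually_lt_const hPos
    have hev2 : ∀ᶠ z in 𝓝[>] L, z < t :=
      eventually_nhdsWithin_of_eventually_nhds (eventually_lt_nhds ht.1)
    have hev3 : ∀ᶠ z in 𝓝[>] L, L < z := self_mem_nhdsWithin
    obtain ⟨z, hz1, hzt, hLz⟩ := (hev1.and (hev2.and hev3)).exists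
    -- apply gronwall on [z, R]
    have hsub : ∀ x ∈ Set.Ico z R, x ∈ Set.Ioo L R :=
      fun x hx => ⟨lt_of_lt_of_le hLz hx.1, hx.2⟩
    have hIccz : Set.Icc z R ⊆ Set.Icc L R := Set.Icc_subset_Icc hLz.le le_rfl
    have hbound : ∀ x ∈ Set.Ico z R,
        (u x = fF x → (r * ρ * (F x * M x / (M x + γ * MS x)) *
          Real.exp (-(β * (M x + F x))) - μM * M x) - (r * ρ * κ * Fb x - μM * Mb x)
          ≤ K * fF x) ∧
        (v x = fF x → ((1 - r) * ρ * (F x * M x / (M x + γ * MS x)) *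
          Real.exp (-(β * (M x + F x))) - μF * F x) - ((1 - r) * ρ * κ * Fb x - μF * Fb x)
          ≤ K * fF x) := by
      intro x hx
      have hxO : x ∈ Set.Ioo L R := hsub x hx
      have hxI : x ∈ Set.Icc L R := ⟨hxO.1.le, hxO.2.le⟩
      have hx0 : (0:ℝ) ≤ x := hIccIci hxI
      set T := F x * M x / (M x + γ * MS x) with hT_def
      set E := Real.exp (-(β * (M x + F x))) with hE_def
      have hT : T ≤ κ * Fb x + K₃ * fF x :=
        Tbound hκ0 hκ1 hc hK₃ hσ₀ (hMS x ⟨hxO.1, hxO.2.le⟩) (hMh1 x hxI) (hMh2 x hxI)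
          hFL0 (hFb0 x hxI) (hFbF₀ x hxI) (hMnn x hx0) (hFnn x hx0) (hfF0 x)
          (le_trans (le_max_left _ _) (le_max_left _ _))
          (le_trans (le_max_right _ _) (le_max_left _ _)) (hMb0 x hxI)
      have hT0 : 0 ≤ T := by
        rw [hT_def]
        apply div_nonneg (mul_nonneg (hFnn x hx0) (hMnn x hx0))
        have h1 : (0:ℝ) ≤ c * Mh x := by
          apply mul_nonneg (by rw [hc]; exact div_nonneg (by linarith only [hκ1]) hκ0.le)
          exact le_trans (mul_nonneg hσ₀.le hFL0) (hMh2 x hxI)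
        linarith only [hMS x ⟨hxO.1, hxO.2.le⟩, hMnn x hx0, h1]
      have hE1 : E ≤ 1 := by
        rw [hE_def, Real.exp_le_one_iff]
        have h5 := hMnn x hx0; have h6 := hFnn x hx0
        linarith only [mul_nonneg hβ.le (add_nonneg h5 h6)]
      have hTE : T * E ≤ κ * Fb x + K₃ * fF x :=
        le_trans (mul_le_of_le_one_right hT0 hE1) hT
      constructor
      · intro hact
        have h1 : r * ρ * (T * E - κ * Fb x) ≤ r * ρ * (K₃ * fF x) :=
          mul_le_mul_of_nonneg_left (by linarith only [hTE]) (by positivity)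
        have h2 : r * ρ * (K₃ * fF x) ≤ ρ * K₃ * fF x := by
          linarith only [mul_nonneg (mul_nonneg (show (0:ℝ) ≤ 1 - r by
            linarith only [hr1]) hρ.le)
            (mul_nonneg (show (0:ℝ) ≤ K₃ by linarith only [hK₃1]) (hfF0 x))]
        have h3 : M x - Mb x = fF x := hact
        have h3' : μM * (M x - Mb x) = μM * fF x := by rw [h3]
        have h4 : 0 ≤ μM * fF x := mul_nonneg hμM.le (hfF0 x)
        rw [hK]
        have e : r * ρ * T * E = r * ρ * (T * E) := by ring
        linarith only [h1, h2, h3', h4, e]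
      · intro hact
        have h1 : (1 - r) * ρ * (T * E - κ * Fb x) ≤ (1 - r) * ρ * (K₃ * fF x) :=
          mul_le_mul_of_nonneg_left (by linarith only [hTE])
            (mul_nonneg (show (0:ℝ) ≤ 1 - r by linarith only [hr1]) hρ.le)
        have h2 : (1 - r) * ρ * (K₃ * fF x) ≤ ρ * K₃ * fF x := by
          linarith only [mul_nonneg (mul_nonneg hr0.le hρ.le)
            (mul_nonneg (show (0:ℝ) ≤ K₃ by linarith only [hK₃1]) (hfF0 x))]
        have h3 : F x - Fb x = fF x := hact
        have h3' : μF * (F x - Fb x) = μF * fF x := by rw [h3]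
        have h4 : 0 ≤ μF * fF x := mul_nonneg hμF.le (hfF0 x)
        rw [hK]
        have e : (1 - r) * ρ * T * E = (1 - r) * ρ * (T * E) := by ring
        linarith only [h1, h2, h3', h4, e]
    have hgr := gronwall_max3 (u := u) (v := v)
      (u' := fun x => (r * ρ * (F x * M x / (M x + γ * MS x)) *
          Real.exp (-(β * (M x + F x))) - μM * M x) - (r * ρ * κ * Fb x - μM * Mb x))
      (v' := fun x => ((1 - r) * ρ * (F x * M x / (M x + γ * MS x)) *
          Real.exp (-(β * (M x + F x))) - μF * F x) - ((1 - r) * ρ * κ * Fb x - μF * Fb x))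
      (a := z) (b := R) hK0 (hfFcont.mono hIccz)
      (fun x hx => ((hode x (hsub x hx)).1).sub (hMb' x))
      (fun x hx => ((hode x (hsub x hx)).2).sub (hFb' x))
      (fun x hx hact => (hbound x hx).1 hact)
      (fun x hx hact => (hbound x hx).2 hact)
    have ht' : t ∈ Set.Icc z R := ⟨hzt.le, ht.2⟩
    have := hgr t ht'
    have hexp : Real.exp (K * (t - z)) ≤ Real.exp (K * (R - L)) := by
      apply Real.exp_le_exp.2
      apply mul_le_mul_of_nonneg_left _ hK0
      have := ht.2; linarith
    have hfz0 : 0 ≤ fF z := hfF0 z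
    have hcontr : fF t < fF t := by
      calc fF t ≤ fF z * Real.exp (K * (t - z)) := this
      _ ≤ fF z * Real.exp (K * (R - L)) :=
          mul_le_mul_of_nonneg_left hexp hfz0
      _ < (fF t * Real.exp (-(K * (R - L)))) * Real.exp (K * (R - L)) := by
          apply mul_lt_mul_of_pos_right hz1 (Real.exp_pos _)
      _ = fF t := by rw [mul_assoc, ← Real.exp_add]; simp
    exact absurd hcontr (lt_irrefl _)
  intro t ht
  have := main t ht
  constructor
  · have : u t ≤ 0 := le_trans (le_trans (le_max_left _ _) (le_max_left _ _)) this
    simpa [hu_def] using this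
  · have : v t ≤ 0 := le_trans (le_trans (le_max_right _ _) (le_max_left _ _)) this
    simpa [hv_def] using this

/-- The impulsive SIT system: on each interval `(nτ, (n+1)τ]` the sterile male population
`MS` decays exponentially from the value `τ Λ_n + MS(nτ)` obtained after the `n`-th impulsive
release, while the wild populations `M, F` are continuous, nonnegative, and satisfy the SIT
entomological ODEs (with the convention that `F M/(M + γ MS) = 0` when `M + γ MS = 0`,
which is Lean's convention for division by zero). -/
def ImpulsiveSIT (r ρ β μM μF μS γ τ : ℝ) (Λ : ℕ → ℝ) (MS M F : ℝ → ℝ) : Prop :=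
  (∀ n : ℕ, 0 ≤ Λ n) ∧ 0 ≤ MS 0 ∧
  (∀ n : ℕ, ∀ t ∈ Set.Ioc ((n : ℝ) * τ) (((n : ℝ) + 1) * τ),
    MS t = (τ * Λ n + MS ((n : ℝ) * τ)) * Real.exp (-(μS * (t - (n : ℝ) * τ)))) ∧
  ContinuousOn M (Set.Ici 0) ∧ ContinuousOn F (Set.Ici 0) ∧
  (∀ t, 0 ≤ t → 0 ≤ M t) ∧ (∀ t, 0 ≤ t → 0 ≤ F t) ∧
  (∀ n : ℕ, ∀ t ∈ Set.Ioo ((n : ℝ) * τ) (((n : ℝ) + 1) * τ),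
    HasDerivAt M (r * ρ * (F t * M t / (M t + γ * MS t)) *
      Real.exp (-(β * (M t + F t))) - μM * M t) t ∧
    HasDerivAt F ((1 - r) * ρ * (F t * M t / (M t + γ * MS t)) *
      Real.exp (-(β * (M t + F t))) - μF * F t) t)

set_option maxHeartbeats 2000000 in
lemma interval_inst (r ρ β μM μF μS γ τ k κ α σ₀ : ℝ) (n : ℕ)
    (hr0 : 0 < r) (hr1 : r < 1) (hρ : 0 < ρ) (hβ : 0 < β)
    (hμM : 0 < μM) (hμF : 0 < μF) (hμS : 0 < μS) (hγ : 0 < γ)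
    (hμ1 : μF ≤ μM) (hμ2 : μM ≤ μS) (hτ : 0 < τ)
    (hk0 : 0 < k) (hk1 : k < μF / ((1 - r) * ρ))
    (hκ : κ = min k 1) (hα : α = μF - (1 - r) * ρ * κ)
    (hσ₀ : σ₀ = r * ρ * κ * (Real.exp (-(α * τ)) - Real.exp (-(μM * τ))) / (μM - α))
    (Λ : ℕ → ℝ) (MS M F : ℝ → ℝ)
    (hS : ImpulsiveSIT r ρ β μM μF μS γ τ Λ MS M F)
    (hΛ : ∀ n : ℕ, Λ n ≥ -(1 / τ) * MS ((n : ℝ) * τ) + (1 / (γ * τ)) *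
        (((1 - k) / k) * Real.exp ((μS - μM) * τ) * M ((n : ℝ) * τ) +
         (r * ρ * (1 - k) / (μM - μF + (1 - r) * ρ * k)) *
           (Real.exp ((μS - μF + (1 - r) * ρ * k) * τ) -
             Real.exp ((μS - μM) * τ)) * F ((n : ℝ) * τ)))
    (hMSn : 0 ≤ MS ((n : ℝ) * τ)) :
    ∀ t ∈ Set.Ioc ((n : ℝ) * τ) (((n : ℝ) + 1) * τ),
      M t ≤ Real.exp (-(μM * (t - (n : ℝ) * τ))) * M ((n : ℝ) * τ) +
        r * ρ * κ / (μM - α) * (Real.exp (-(α * (t - (n : ℝ) * τ))) -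
          Real.exp (-(μM * (t - (n : ℝ) * τ)))) * F ((n : ℝ) * τ) ∧
      F t ≤ Real.exp (-(α * (t - (n : ℝ) * τ))) * F ((n : ℝ) * τ) := by
  obtain ⟨hΛ0, hMS0, hMSf, hMcont, hFcont, hMnn, hFnn, hode⟩ := hS
  set L : ℝ := (n : ℝ) * τ with hL_def
  set R : ℝ := ((n : ℝ) + 1) * τ with hR_def
  have hL0 : 0 ≤ L := mul_nonneg (Nat.cast_nonneg n) hτ.le
  have hRL : R - L = τ := by rw [hL_def, hR_def]; ring
  have hLR : L < R := by linarith
  have hκ0 : 0 < κ := by rw [hκ]; exact lt_min hk0 one_pos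
  have hκ1 : κ ≤ 1 := by rw [hκ]; exact min_le_right _ _
  have hκk : κ ≤ k := by rw [hκ]; exact min_le_left _ _
  have h1r : 0 < (1 - r) * ρ := by nlinarith
  have hkμF : (1 - r) * ρ * k < μF := by
    rw [lt_div_iff₀ h1r] at hk1; nlinarith
  have hα0 : 0 < α := by
    have : (1 - r) * ρ * κ ≤ (1 - r) * ρ * k := by nlinarith
    rw [hα]; linarith
  have hαμM : α < μM := by
    have : 0 < (1 - r) * ρ * κ := by positivity
    rw [hα]; linarith
  have hgpos : 0 < Real.exp (-(α * τ)) - Real.exp (-(μM * τ)) :=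
    sub_pos.2 (Real.exp_lt_exp.2 (by nlinarith))
  have hμMα : 0 < μM - α := by linarith
  have hC0 : 0 < r * ρ * κ / (μM - α) := div_pos (by positivity) hμMα
  have hσ₀pos : 0 < σ₀ := by rw [hσ₀]; exact div_pos (mul_pos (by positivity) hgpos) hμMα
  have hM₀ : 0 ≤ M L := hMnn L hL0
  have hF₀ : 0 ≤ F L := hFnn L hL0
  set Mb : ℝ → ℝ := fun t => Real.exp (-(μM * (t - L))) * M L +
    r * ρ * κ / (μM - α) * (Real.exp (-(α * (t - L))) - Real.exp (-(μM * (t - L)))) * F L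
    with hMb_def
  set Fb : ℝ → ℝ := fun t => Real.exp (-(α * (t - L))) * F L with hFb_def
  set Mh : ℝ → ℝ := fun t => Real.exp ((μS - μM) * τ - μS * (t - L)) * M L +
    r * ρ * κ / (μM - α) * (Real.exp (μS * (τ - (t - L))) *
      (Real.exp (-(α * τ)) - Real.exp (-(μM * τ)))) * F L with hMh_def
  have hexp : ∀ (b x : ℝ), HasDerivAt (fun t => Real.exp (-(b * (t - L))))
      (-b * Real.exp (-(b * (x - L)))) x := by
    intro b x
    have h1 : HasDerivAt (fun t : ℝ => -(b * (t - L))) (-b) x := by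
      simpa using (((hasDerivAt_id x).sub_const L).const_mul b).fun_neg
    simpa [mul_comm] using h1.exp
  have hMb' : ∀ x, HasDerivAt Mb (r * ρ * κ * Fb x - μM * Mb x) x := by
    intro x
    have h := ((hexp μM x).mul_const (M L)).add
      ((((hexp α x).sub (hexp μM x)).const_mul (r * ρ * κ / (μM - α))).mul_const (F L))
    refine h.congr_deriv ?_
    rw [hFb_def, hMb_def]
    field_simp
    ring
  have hFb' : ∀ x, HasDerivAt Fb ((1 - r) * ρ * κ * Fb x - μF * Fb x) x := by
    intro x
    have h := (hexp α x).mul_const (F L)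
    refine h.congr_deriv ?_
    rw [hFb_def, hα]; ring
  have hMbL : Mb L = M L := by rw [hMb_def]; simp
  have hFbL : Fb L = F L := by rw [hFb_def]; simp
  have hIccFacts : ∀ x ∈ Set.Icc L R, 0 ≤ x - L ∧ x - L ≤ τ := by
    intro x hx; constructor <;> [linarith [hx.1]; linarith [hx.2]]
  have hFb0 : ∀ x ∈ Set.Icc L R, 0 ≤ Fb x :=
    fun x _ => mul_nonneg (Real.exp_pos _).le hF₀
  have hFbF₀ : ∀ x ∈ Set.Icc L R, Fb x ≤ F L := by
    intro x hx
    obtain ⟨h1, h2⟩ := hIccFacts x hx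
    have h3 : Real.exp (-(α * (x - L))) ≤ 1 := by
      rw [Real.exp_le_one_iff]; linarith only [mul_nonneg hα0.le h1]
    rw [hFb_def]; dsimp only
    linarith only [mul_le_mul_of_nonneg_right h3 hF₀]
  have hMb0 : ∀ x ∈ Set.Icc L R, 0 ≤ Mb x := by
    intro x hx
    obtain ⟨h1, h2⟩ := hIccFacts x hx
    have he : Real.exp (-(μM * (x - L))) ≤ Real.exp (-(α * (x - L))) :=
      Real.exp_le_exp.2 (by nlinarith)
    have t1 : 0 ≤ Real.exp (-(μM * (x - L))) * M L :=
      mul_nonneg (Real.exp_pos _).le hM₀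
    have t2 : 0 ≤ r * ρ * κ / (μM - α) *
        (Real.exp (-(α * (x - L))) - Real.exp (-(μM * (x - L)))) * F L :=
      mul_nonneg (mul_nonneg hC0.le (by linarith)) hF₀
    rw [hMb_def]; dsimp only; linarith only [t1, t2]
  have hMh1 : ∀ x ∈ Set.Icc L R, Mb x ≤ Mh x := by
    intro x hx
    obtain ⟨h1, h2⟩ := hIccFacts x hx
    have term1 : Real.exp (-(μM * (x - L))) ≤ Real.exp ((μS - μM) * τ - μS * (x - L)) :=
      Real.exp_le_exp.2 (by nlinarith [mul_nonneg (sub_nonneg.2 hμ2) (sub_nonneg.2 h2)])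
    have s1 : Real.exp (μM * (τ - (x - L))) * (Real.exp (-(α * τ)) - Real.exp (-(μM * τ)))
        ≤ Real.exp (μS * (τ - (x - L))) * (Real.exp (-(α * τ)) - Real.exp (-(μM * τ))) :=
      mul_le_mul_of_nonneg_right
        (Real.exp_le_exp.2 (by nlinarith [mul_nonneg (sub_nonneg.2 hμ2) (sub_nonneg.2 h2)]))
        hgpos.le
    have s2 : Real.exp (μM * (τ - (x - L))) * (Real.exp (-(α * τ)) - Real.exp (-(μM * τ)))
        = Real.exp (μM * (τ - (x - L)) - α * τ) - Real.exp (-(μM * (x - L))) := by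
      rw [mul_sub, ← Real.exp_add, ← Real.exp_add]
      ring_nf
    have s3 : Real.exp (-(α * (x - L))) ≤ Real.exp (μM * (τ - (x - L)) - α * τ) :=
      Real.exp_le_exp.2 (by nlinarith [mul_nonneg (sub_nonneg.2 hαμM.le) (sub_nonneg.2 h2)])
    have term2 : Real.exp (-(α * (x - L))) - Real.exp (-(μM * (x - L)))
        ≤ Real.exp (μS * (τ - (x - L))) * (Real.exp (-(α * τ)) - Real.exp (-(μM * τ))) := by
      linarith only [s1, s2, s3]
    have c1 : Real.exp (-(μM * (x - L))) * M L ≤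
        Real.exp ((μS - μM) * τ - μS * (x - L)) * M L :=
      mul_le_mul_of_nonneg_right term1 hM₀
    have c2 : r * ρ * κ / (μM - α) * (Real.exp (-(α * (x - L))) -
          Real.exp (-(μM * (x - L)))) * F L ≤
        r * ρ * κ / (μM - α) * (Real.exp (μS * (τ - (x - L))) *
          (Real.exp (-(α * τ)) - Real.exp (-(μM * τ)))) * F L :=
      mul_le_mul_of_nonneg_right (mul_le_mul_of_nonneg_left term2 hC0.le) hF₀
    rw [hMb_def, hMh_def]; dsimp only; linarith only [c1, c2]
  have hMh2 : ∀ x ∈ Set.Icc L R, σ₀ * F L ≤ Mh x := by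
    intro x hx
    obtain ⟨h1, h2⟩ := hIccFacts x hx
    have he1 : (1:ℝ) ≤ Real.exp (μS * (τ - (x - L))) := by
      have : (0:ℝ) ≤ μS * (τ - (x - L)) := by nlinarith
      linarith [Real.add_one_le_exp (μS * (τ - (x - L)))]
    have t1 : 0 ≤ Real.exp ((μS - μM) * τ - μS * (x - L)) * M L :=
      mul_nonneg (Real.exp_pos _).le hM₀
    have t2 : σ₀ * F L ≤ r * ρ * κ / (μM - α) * (Real.exp (μS * (τ - (x - L))) *
        (Real.exp (-(α * τ)) - Real.exp (-(μM * τ)))) * F L := by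
      apply mul_le_mul_of_nonneg_right _ hF₀
      rw [hσ₀, div_le_iff₀ hμMα]
      have hfe : r * ρ * κ / (μM - α) * (Real.exp (μS * (τ - (x - L))) *
          (Real.exp (-(α * τ)) - Real.exp (-(μM * τ)))) * (μM - α)
          = r * ρ * κ * (Real.exp (μS * (τ - (x - L))) *
          (Real.exp (-(α * τ)) - Real.exp (-(μM * τ)))) := by
        field_simp
      rw [hfe]
      linarith only [mul_le_mul_of_nonneg_left he1
        (mul_nonneg (mul_nonneg (mul_nonneg hr0.le hρ.le) hκ0.le) hgpos.le)]
    rw [hMh_def]; dsimp only; linarith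
  have hMS : ∀ x ∈ Set.Ioc L R, (1 - κ)/κ * Mh x ≤ γ * MS x := by
    intro x hx
    have hMSx : MS x = (τ * Λ n + MS L) * Real.exp (-(μS * (x - L))) := hMSf n x hx
    rcases lt_or_ge k 1 with hk | hk
    · have hκk' : κ = k := by rw [hκ]; exact min_eq_left hk.le
      have hαk : μM - μF + (1 - r) * ρ * k = μM - α := by rw [hα, hκk']; ring
      have hαk2 : (μS - μF + (1 - r) * ρ * k) = μS - α := by rw [hα, hκk']; ring
      have hΛn := hΛ n
      set P : ℝ := (1 - k) / k * Real.exp ((μS - μM) * τ) * M L +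
          r * ρ * (1 - k) / (μM - μF + (1 - r) * ρ * k) *
            (Real.exp ((μS - μF + (1 - r) * ρ * k) * τ) -
              Real.exp ((μS - μM) * τ)) * F L with hP_def
      clear_value P
      have key : γ * (τ * Λ n + MS L) ≥ P := by
        have h1 : γ * τ * (Λ n + (1 / τ) * MS L) ≥ γ * τ * ((1 / (γ * τ)) * P) := by
          apply mul_le_mul_of_nonneg_left _ (by positivity)
          linarith only [hΛn]
        have e2 : γ * τ * (Λ n + (1 / τ) * MS L) = γ * (τ * Λ n + MS L) := by
          field_simp
        have e3 : γ * τ * ((1 / (γ * τ)) * P) = P := by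
          field_simp
        linarith only [h1, e2, e3]
      have i1 : Real.exp ((μS - μM) * τ - μS * (x - L)) =
          Real.exp ((μS - μM) * τ) * Real.exp (-(μS * (x - L))) := by
        rw [← Real.exp_add]; ring_nf
      have i2 : Real.exp (μS * (τ - (x - L))) *
            (Real.exp (-(α * τ)) - Real.exp (-(μM * τ))) =
          (Real.exp ((μS - α) * τ) - Real.exp ((μS - μM) * τ)) *
            Real.exp (-(μS * (x - L))) := by
        rw [mul_sub, sub_mul, ← Real.exp_add, ← Real.exp_add, ← Real.exp_add,
          ← Real.exp_add]
        ring_nf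
      have hMhval : (1 - κ)/κ * Mh x = P * Real.exp (-(μS * (x - L))) := by
        rw [hMh_def, hP_def]; dsimp only
        rw [hκk', hαk, hαk2, i1, i2]
        field_simp
      rw [hMhval, hMSx]
      calc P * Real.exp (-(μS * (x - L)))
          ≤ γ * (τ * Λ n + MS L) * Real.exp (-(μS * (x - L))) :=
            mul_le_mul_of_nonneg_right key (Real.exp_pos _).le
      _ = γ * ((τ * Λ n + MS L) * Real.exp (-(μS * (x - L)))) := by ring
    · have hκk' : κ = 1 := by rw [hκ]; exact min_eq_right hk
      have hc0 : (1 - κ)/κ = 0 := by rw [hκk']; norm_num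
      rw [hc0, zero_mul, hMSx]
      have h5 : 0 ≤ τ * Λ n + MS L := add_nonneg (mul_nonneg hτ.le (hΛ0 n)) hMSn
      exact mul_nonneg hγ.le (mul_nonneg h5 (Real.exp_pos _).le)
  have := interval_core (K₃ := 1 + κ/σ₀) (K := ρ * (1 + κ/σ₀)) (Mh := Mh)
    hr0 hr1 hρ hμM hμF hβ hκ0 hκ1 rfl hσ₀pos rfl rfl hL0 hLR hMcont hFcont hMnn hFnn
    (hode n) hMb' hFb' hMbL hFbL hMb0 hFb0 hFbF₀ hMh1 hMh2 hMS
  exact this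

set_option maxHeartbeats 2000000 in
theorem stmt_13 (r ρ β μM μF μS γ τ k : ℝ)
    (hr0 : 0 < r) (hr1 : r < 1) (hρ : 0 < ρ) (hβ : 0 < β)
    (hμM : 0 < μM) (hμF : 0 < μF) (hμS : 0 < μS) (hγ : 0 < γ)
    (hμ1 : μF ≤ μM) (hμ2 : μM ≤ μS) (hτ : 0 < τ)
    (hk0 : 0 < k) (hk1 : k < μF / ((1 - r) * ρ)) :
    ∃ ε > 0, ∀ (Λ : ℕ → ℝ) (MS M F : ℝ → ℝ),
      ImpulsiveSIT r ρ β μM μF μS γ τ Λ MS M F →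
      (∀ n : ℕ, Λ n ≥ -(1 / τ) * MS ((n : ℝ) * τ) + (1 / (γ * τ)) *
        (((1 - k) / k) * Real.exp ((μS - μM) * τ) * M ((n : ℝ) * τ) +
         (r * ρ * (1 - k) / (μM - μF + (1 - r) * ρ * k)) *
           (Real.exp ((μS - μF + (1 - r) * ρ * k) * τ) -
             Real.exp ((μS - μM) * τ)) * F ((n : ℝ) * τ))) →
      ∃ C > 0, ∀ t, 0 ≤ t → M t + F t ≤ C * Real.exp (-(ε * t)) := by
  have hκ : (min k 1 : ℝ) = min k 1 := rfl
  set κ : ℝ := min k 1 with hκdef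
  set α : ℝ := μF - (1 - r) * ρ * κ with hαdef
  set σ₀ : ℝ := r * ρ * κ * (Real.exp (-(α * τ)) - Real.exp (-(μM * τ))) / (μM - α)
    with hσ₀def
  have hκ0 : 0 < κ := lt_min hk0 one_pos
  have hκ1 : κ ≤ 1 := min_le_right _ _
  have hκk : κ ≤ k := min_le_left _ _
  clear_value κ
  have h1r : 0 < (1 - r) * ρ := by nlinarith
  have hkμF : (1 - r) * ρ * k < μF := by
    rw [lt_div_iff₀ h1r] at hk1; nlinarith
  have hα0 : 0 < α := by
    have : (1 - r) * ρ * κ ≤ (1 - r) * ρ * k := by nlinarith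
    rw [hαdef]; linarith
  have hαμM : α < μM := by
    have h5 : 0 < (1 - r) * ρ * κ := mul_pos h1r hκ0
    rw [hαdef]; linarith only [h5, hμ1, hτ, hμF, hμM]
  have hμMα : 0 < μM - α := by linarith only [hαμM]
  clear_value α
  have heα0 : 0 < Real.exp (-(α * τ)) := Real.exp_pos _
  have heM0 : 0 < Real.exp (-(μM * τ)) := Real.exp_pos _
  have heα1 : Real.exp (-(α * τ)) < 1 := by
    rw [Real.exp_lt_one_iff]; linarith only [mul_pos hα0 hτ]
  have heM1 : Real.exp (-(μM * τ)) < 1 := by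
    rw [Real.exp_lt_one_iff]; linarith only [mul_pos hμM hτ]
  have hgpos : 0 < Real.exp (-(α * τ)) - Real.exp (-(μM * τ)) :=
    sub_pos.2 (Real.exp_lt_exp.2 (by linarith only [mul_lt_mul_of_pos_right hαμM hτ]))
  have hσ₀pos : 0 < σ₀ := by
    rw [hσ₀def]
    exact div_pos (mul_pos (mul_pos (mul_pos hr0 hρ) hκ0) hgpos) hμMα
  clear_value σ₀
  set eα : ℝ := Real.exp (-(α * τ)) with heαdef
  set eM : ℝ := Real.exp (-(μM * τ)) with heMdef
  clear_value eα eM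
  have hσ₀def4 : σ₀ = r * ρ * κ *
      (Real.exp (-(α * τ)) - Real.exp (-(μM * τ))) / (μM - α) := by
    rw [hσ₀def, heαdef, heMdef]
  set θ : ℝ := 2 * σ₀ / (1 - eα) + 1 with hθdef
  have hθ1 : 1 ≤ θ := by
    rw [hθdef]
    have : 0 ≤ 2 * σ₀ / (1 - eα) := div_nonneg (by linarith) (by linarith)
    linarith
  have hθ0 : 0 < θ := by linarith
  clear_value θ
  set q : ℝ := max eM (eα + σ₀ / θ) with hqdef
  have hq0 : 0 < q := lt_of_lt_of_le heM0 (le_max_left _ _)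
  clear_value q
  have hq1 : q < 1 := by
    rw [hqdef]
    apply max_lt heM1
    have h1 : σ₀ / θ ≤ (1 - eα) / 2 := by
      rw [div_le_div_iff₀ hθ0 two_pos]
      have hne : (1:ℝ) - eα ≠ 0 := ne_of_gt (by linarith only [heα1])
      have e0' : 2 * σ₀ / (1 - eα) * (1 - eα) = 2 * σ₀ := div_mul_cancel₀ _ hne
      have e1 : (1 - eα) * θ = 2 * σ₀ + (1 - eα) := by
        rw [hθdef]; linear_combination e0'
      linarith only [e1, heα1]
    linarith only [h1, heα1]
  have hlogq : Real.log q < 0 := Real.log_neg hq0 hq1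
  set ε : ℝ := -Real.log q / τ with hεdef
  have hε0 : 0 < ε := div_pos (by linarith only [hlogq]) hτ
  clear_value ε
  refine ⟨ε, hε0, ?_⟩
  intro Λ MS M F hS hΛ
  obtain ⟨hΛ0, hMS0, hMSf, hMcont, hFcont, hMnn, hFnn, hode⟩ := hS
  -- nonnegativity of MS at release times
  have hMSn : ∀ n : ℕ, 0 ≤ MS ((n : ℝ) * τ) := by
    intro n
    induction n with
    | zero => simpa using hMS0
    | succ m ih =>
      have hmem : ((m : ℝ) + 1) * τ ∈ Set.Ioc ((m : ℝ) * τ) (((m : ℝ) + 1) * τ) :=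
        ⟨by linarith only [hτ], le_refl _⟩
      have hval := hMSf m _ hmem
      have hcast : (((m + 1 : ℕ) : ℝ)) * τ = ((m : ℝ) + 1) * τ := by push_cast; ring
      rw [hcast, hval]
      exact mul_nonneg (add_nonneg (mul_nonneg hτ.le (hΛ0 m)) ih) (Real.exp_pos _).le
  have hIB := fun n => interval_inst r ρ β μM μF μS γ τ k κ α σ₀ n
    hr0 hr1 hρ hβ hμM hμF hμS hγ hμ1 hμ2 hτ hk0 hk1 hκdef hαdef hσ₀def4 Λ MS M F
    ⟨hΛ0, hMS0, hMSf, hMcont, hFcont, hMnn, hFnn, hode⟩ hΛ (hMSn n)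
  have hLnn : ∀ n : ℕ, (0:ℝ) ≤ (n : ℝ) * τ :=
    fun n => mul_nonneg (Nat.cast_nonneg n) hτ.le
  have hMseq0 : ∀ n : ℕ, 0 ≤ M ((n : ℝ) * τ) := fun n => hMnn _ (hLnn n)
  have hFseq0 : ∀ n : ℕ, 0 ≤ F ((n : ℝ) * τ) := fun n => hFnn _ (hLnn n)
  have hCb : 0 < r * ρ * κ / (μM - α) :=
    div_pos (mul_pos (mul_pos hr0 hρ) hκ0) hμMα
  have hσe : r * ρ * κ / (μM - α) * (eα - eM) = σ₀ := by
    rw [hσ₀def, heαdef, heMdef]; ring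
  -- one-step sequence estimates
  have hstep : ∀ n : ℕ, M (((n : ℝ) + 1) * τ) ≤ eM * M ((n : ℝ) * τ) + σ₀ * F ((n : ℝ) * τ)
      ∧ F (((n : ℝ) + 1) * τ) ≤ eα * F ((n : ℝ) * τ) := by
    intro n
    have hmem : ((n : ℝ) + 1) * τ ∈ Set.Ioc ((n : ℝ) * τ) (((n : ℝ) + 1) * τ) :=
      ⟨by linarith only [hτ], le_refl _⟩
    have h := hIB n _ hmem
    have hΔ : ((n : ℝ) + 1) * τ - (n : ℝ) * τ = τ := by ring
    rw [hΔ] at h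
    rw [← heαdef, ← heMdef] at h
    exact ⟨by rw [← hσe]; exact h.1, h.2⟩
  -- Lyapunov sequence
  have hVstep : ∀ n : ℕ, M (((n : ℝ) + 1) * τ) + θ * F (((n : ℝ) + 1) * τ) ≤
      q * (M ((n : ℝ) * τ) + θ * F ((n : ℝ) * τ)) := by
    intro n
    obtain ⟨h1, h2⟩ := hstep n
    have hqM : eM ≤ q := by rw [hqdef]; exact le_max_left _ _
    have hqF : eα + σ₀ / θ ≤ q := by rw [hqdef]; exact le_max_right _ _
    have hθq : σ₀ + θ * eα ≤ q * θ := by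
      have h3 := mul_le_mul_of_nonneg_left hqF hθ0.le
      have hneθ : θ ≠ 0 := ne_of_gt hθ0
      have e0'' : σ₀ / θ * θ = σ₀ := div_mul_cancel₀ _ hneθ
      have e : θ * (eα + σ₀ / θ) = θ * eα + σ₀ := by linear_combination e0''
      linarith only [h3, e, hθ0, hσ₀pos, heα0]
    have a1 : eM * M ((n : ℝ) * τ) ≤ q * M ((n : ℝ) * τ) :=
      mul_le_mul_of_nonneg_right hqM (hMseq0 n)
    have a2 : (σ₀ + θ * eα) * F ((n : ℝ) * τ) ≤ q * θ * F ((n : ℝ) * τ) :=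
      mul_le_mul_of_nonneg_right hθq (hFseq0 n)
    have a3 : θ * F (((n : ℝ) + 1) * τ) ≤ θ * (eα * F ((n : ℝ) * τ)) :=
      mul_le_mul_of_nonneg_left h2 hθ0.le
    linarith only [a1, a2, a3, h1]
  have hVnn : ∀ n : ℕ, 0 ≤ M ((n : ℝ) * τ) + θ * F ((n : ℝ) * τ) :=
    fun n => add_nonneg (hMseq0 n) (mul_nonneg hθ0.le (hFseq0 n))
  have hV : ∀ n : ℕ, M ((n : ℝ) * τ) + θ * F ((n : ℝ) * τ) ≤
      q ^ n * (M ((0 : ℝ) * τ) + θ * F ((0 : ℝ) * τ)) := by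
    intro n
    induction n with
    | zero => simp
    | succ m ih =>
      have hcast : (((m + 1 : ℕ) : ℝ)) = ((m : ℝ) + 1) := by push_cast; ring
      rw [hcast]
      calc M (((m : ℝ) + 1) * τ) + θ * F (((m : ℝ) + 1) * τ)
          ≤ q * (M ((m : ℝ) * τ) + θ * F ((m : ℝ) * τ)) := hVstep m
        _ ≤ q * (q ^ m * (M ((0 : ℝ) * τ) + θ * F ((0 : ℝ) * τ))) :=
            mul_le_mul_of_nonneg_left ih hq0.le
        _ = q ^ (m + 1) * (M ((0 : ℝ) * τ) + θ * F ((0 : ℝ) * τ)) := by ring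
  set V0 : ℝ := M ((0 : ℝ) * τ) + θ * F ((0 : ℝ) * τ) with hV0def
  have hV00 : 0 ≤ V0 := by
    rw [hV0def]
    have h := hVnn 0
    push_cast at h
    exact h
  clear_value V0
  set Cb : ℝ := r * ρ * κ / (μM - α) with hCbdef
  clear_value Cb
  have hCpos : 0 < ((Cb + 2) * (V0 + 1) + 1) * Real.exp (ε * τ) := by
    have h5 : 0 < (Cb + 2) * (V0 + 1) :=
      mul_pos (by linarith only [hCb]) (by linarith only [hV00])
    exact mul_pos (by linarith only [h5]) (Real.exp_pos _)
  refine ⟨((Cb + 2) * (V0 + 1) + 1) * Real.exp (ε * τ), hCpos, ?_⟩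
  intro t ht
  have hexpτ : 1 ≤ Real.exp (ε * τ) := by
    have h5 : (0:ℝ) ≤ ε * τ := mul_nonneg hε0.le hτ.le
    linarith only [h5, Real.add_one_le_exp (ε * τ)]
  rcases eq_or_lt_of_le ht with h0 | htpos
  · -- t = 0
    rw [← h0]
    have e0 : M 0 + F 0 ≤ V0 := by
      have : M ((0:ℝ) * τ) = M 0 := by norm_num
      have h2 : F ((0:ℝ) * τ) = F 0 := by norm_num
      have h3 := hFnn 0 le_rfl
      rw [hV0def, this, h2]
      have h4 : 0 ≤ (θ - 1) * F 0 := mul_nonneg (by linarith only [hθ1]) h3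
      linarith only [h4]
    have : Real.exp (-(ε * 0)) = 1 := by norm_num
    rw [this, mul_one]
    have h7 : 0 ≤ (Cb + 1) * (V0 + 1) :=
      mul_nonneg (by linarith only [hCb]) (by linarith only [hV00])
    have hX0 : (0:ℝ) ≤ (Cb + 2) * (V0 + 1) + 1 := by linarith only [h7, hCb, hV00]
    have h9 := mul_le_mul_of_nonneg_left hexpτ hX0
    linarith only [e0, h7, h9, hV00]
  · -- t > 0
    set m : ℕ := Nat.ceil (t / τ) with hmdef
    have hm1 : 1 ≤ m := by
      rw [hmdef]
      exact Nat.one_le_ceil_iff.2 (div_pos htpos hτ)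
    set n : ℕ := m - 1 with hndef
    have hnm : (n : ℝ) = (m : ℝ) - 1 := by
      rw [hndef]; push_cast [Nat.cast_sub hm1]; ring
    have hn1 : (n : ℝ) * τ < t := by
      have h4 : (m : ℝ) < t / τ + 1 := Nat.ceil_lt_add_one (by positivity)
      have h5 : (n : ℝ) < t / τ := by rw [hnm]; linarith
      calc (n : ℝ) * τ < (t / τ) * τ := by
            exact mul_lt_mul_of_pos_right h5 hτ
        _ = t := by field_simp
    have hn2 : t ≤ ((n : ℝ) + 1) * τ := by
      have h4 : t / τ ≤ (m : ℝ) := Nat.le_ceil _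
      have h5 : ((n : ℝ) + 1) = (m : ℝ) := by rw [hnm]; ring
      rw [h5]
      calc t = (t / τ) * τ := by field_simp
        _ ≤ (m : ℝ) * τ := mul_le_mul_of_nonneg_right h4 hτ.le
    have h := hIB n t ⟨hn1, hn2⟩
    have hΔ0 : 0 ≤ t - (n : ℝ) * τ := by linarith
    have he1 : Real.exp (-(μM * (t - (n : ℝ) * τ))) ≤ 1 := by
      rw [Real.exp_le_one_iff]; linarith only [mul_nonneg hμM.le hΔ0]
    have he2 : Real.exp (-(α * (t - (n : ℝ) * τ))) ≤ 1 := by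
      rw [Real.exp_le_one_iff]; linarith only [mul_nonneg hα0.le hΔ0]
    have he3 : 0 < Real.exp (-(μM * (t - (n : ℝ) * τ))) := Real.exp_pos _
    have hMt : M t ≤ M ((n : ℝ) * τ) + Cb * F ((n : ℝ) * τ) := by
      have b1 : Real.exp (-(μM * (t - (n : ℝ) * τ))) * M ((n : ℝ) * τ) ≤ M ((n : ℝ) * τ) :=
        by linarith only [mul_le_mul_of_nonneg_right he1 (hMseq0 n)]
      have b2 : Cb * (Real.exp (-(α * (t - (n : ℝ) * τ))) -
          Real.exp (-(μM * (t - (n : ℝ) * τ)))) * F ((n : ℝ) * τ) ≤ Cb * F ((n : ℝ) * τ) := by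
        have : Real.exp (-(α * (t - (n : ℝ) * τ))) -
            Real.exp (-(μM * (t - (n : ℝ) * τ))) ≤ 1 := by linarith only [he2, he3]
        linarith only [mul_le_mul_of_nonneg_right
          (mul_le_mul_of_nonneg_left this hCb.le) (hFseq0 n)]
      calc M t ≤ Real.exp (-(μM * (t - (n : ℝ) * τ))) * M ((n : ℝ) * τ) +
            Cb * (Real.exp (-(α * (t - (n : ℝ) * τ))) -
              Real.exp (-(μM * (t - (n : ℝ) * τ)))) * F ((n : ℝ) * τ) := h.1
        _ ≤ M ((n : ℝ) * τ) + Cb * F ((n : ℝ) * τ) := by linarith only [b1, b2]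
    have hFt : F t ≤ F ((n : ℝ) * τ) := by
      have h8 := h.2
      linarith only [h8, mul_le_mul_of_nonneg_right he2 (hFseq0 n)]
    -- combine
    have hsum : M t + F t ≤ (Cb + 2) * (M ((n : ℝ) * τ) + θ * F ((n : ℝ) * τ)) := by
      have c1 : F ((n : ℝ) * τ) ≤ M ((n : ℝ) * τ) + θ * F ((n : ℝ) * τ) := by
        have h9 : 0 ≤ (θ - 1) * F ((n : ℝ) * τ) :=
          mul_nonneg (by linarith only [hθ1]) (hFseq0 n)
        linarith only [h9, hMseq0 n]
      have c2 : M ((n : ℝ) * τ) ≤ M ((n : ℝ) * τ) + θ * F ((n : ℝ) * τ) := by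
        linarith only [mul_nonneg hθ0.le (hFseq0 n)]
      linarith only [hMt, hFt, c1, c2, mul_le_mul_of_nonneg_left c1 hCb.le]
    have hqn : q ^ n = Real.exp ((n : ℝ) * Real.log q) := by
      rw [← Real.exp_log hq0, ← Real.exp_nat_mul]
      rw [Real.exp_log hq0]
    have hexpbound : Real.exp ((n : ℝ) * Real.log q) ≤
        Real.exp (ε * τ) * Real.exp (-(ε * t)) := by
      rw [← Real.exp_add, Real.exp_le_exp]
      rw [hεdef]
      have hlq : 0 < -Real.log q := by linarith
      have : t ≤ ((n : ℝ) + 1) * τ := hn2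
      have e1 : -Real.log q / τ * τ = -Real.log q := by field_simp
      have e2 : -Real.log q / τ * t = -Real.log q * (t / τ) := by ring
      rw [e1, e2]
      have h6 : t / τ ≤ (n : ℝ) + 1 := by
        rw [div_le_iff₀ hτ]; linarith
      linarith only [mul_le_mul_of_nonneg_left h6 hlq.le]
    calc M t + F t ≤ (Cb + 2) * (M ((n : ℝ) * τ) + θ * F ((n : ℝ) * τ)) := hsum
      _ ≤ (Cb + 2) * (q ^ n * V0) := by
          apply mul_le_mul_of_nonneg_left _ (by linarith only [hCb])
          exact hV n
      _ = (Cb + 2) * V0 * Real.exp ((n : ℝ) * Real.log q) := by rw [hqn]; ring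
      _ ≤ (Cb + 2) * V0 * (Real.exp (ε * τ) * Real.exp (-(ε * t))) := by
          apply mul_le_mul_of_nonneg_left hexpbound
            (mul_nonneg (by linarith only [hCb]) hV00)
      _ ≤ ((Cb + 2) * (V0 + 1) + 1) * Real.exp (ε * τ) * Real.exp (-(ε * t)) := by
          have hp1 : 0 < Real.exp (ε * τ) := Real.exp_pos _
          have hp2 : 0 < Real.exp (-(ε * t)) := Real.exp_pos _
          have hXY : (Cb + 2) * V0 ≤ (Cb + 2) * (V0 + 1) + 1 := by
            linarith only [hCb]
          linarith only [mul_le_mul_of_nonneg_right hXY (mul_pos hp1 hp2).le]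
end

section
/- Consider the impulsive SIT system: fix τ > 0, nonnegative release amplitudes (Λ_n)_{n∈ℕ}, and M_S(0) ≥ 0; on each interval (nτ,(n+1)τ], M_S(t) = (τΛ_n + M_S(nτ))·e^{−μ_S(t−nτ)}, and M, F : [0,∞) → ℝ are continuous, nonnegative, and satisfy on each such interval M' = rρ·(F M/(M+γM_S))·e^{−β(M+F)} − μ_M M and F' = (1−r)ρ·(F M/(M+γM_S))·e^{−β(M+F)} − μ_F F. Fix k with 0 < k < μ_F/((1−r)ρ) and suppose that for every n ∈ ℕ, Λ_n ≥ −(1/τ)M_S(nτ) + (1/(γτ))·[((1−k)/k)·e^{(μ_S−μ_M)τ}·M(nτ) + (rρ(1−k)/(μ_M−μ_F+(1−r)ρk))·(e^{(μ_S−μ_F+(1−r)ρk)τ} − e^{(μ_S−μ_M)τ})·F(nτ)], and moreover that Λ_n ≤ (1/(γτ))·[((1−k)/k)·e^{(μ_S−μ_M)τ}·M(nτ) + (rρ(1−k)/(μ_M−μ_F+(1−r)ρk))·(e^{(μ_S−μ_F+(1−r)ρk)τ} − e^{(μ_S−μ_M)τ})·F(nτ)]. Then the series ∑_{n=0}^{∞}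 Λ_n converges. -/
set_option maxHeartbeats 2000000

lemma comp_le_of_deriv {y φ y' φ' : ℝ → ℝ} {a b K : ℝ}
    (hy : ContinuousOn y (Set.Icc a b)) (hφ : ContinuousOn φ (Set.Icc a b))
    (hyd : ∀ x ∈ Set.Ioo a b, HasDerivAt y (y' x) x)
    (hφd : ∀ x ∈ Set.Ioo a b, HasDerivAt φ (φ' x) x)
    (hini : y a ≤ φ a)
    (hcomp : ∀ x ∈ Set.Ioo a b, y' x + K * y x ≤ φ' x + K * φ x) :
    ∀ x ∈ Set.Icc a b, y x ≤ φ x := by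
  intro x hx
  have hax : a ≤ x := hx.1
  have hab : a ≤ b := hax.trans hx.2
  set g : ℝ → ℝ := fun t => (y t - φ t) * Real.exp (K * t) with hgdef
  have hgc : ContinuousOn g (Set.Icc a b) :=
    (hy.sub hφ).mul ((Real.continuous_exp.comp (continuous_const.mul continuous_id)).continuousOn)
  have hder : ∀ t ∈ Set.Ioo a b,
      HasDerivAt g ((y' t + K * y t - (φ' t + K * φ t)) * Real.exp (K * t)) t := by
    intro t ht
    have h1 : HasDerivAt (fun u : ℝ => Real.exp (K * u)) (Real.exp (K * t) * (K * 1)) t :=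
      (HasDerivAt.const_mul K (hasDerivAt_id t)).exp
    have h2 := ((hyd t ht).sub (hφd t ht)).mul h1
    refine h2.congr_deriv ?_
    simp only [Pi.sub_apply]
    ring
  have hanti : AntitoneOn g (Set.Icc a b) := by
    apply antitoneOn_of_deriv_nonpos (convex_Icc a b) hgc
    · intro t ht
      rw [interior_Icc] at ht
      exact (hder t ht).differentiableAt.differentiableWithinAt
    · intro t ht
      rw [interior_Icc] at ht
      rw [(hder t ht).deriv]
      have h1 := hcomp t ht
      exact mul_nonpos_of_nonpos_of_nonneg (by linarith) (Real.exp_nonneg _)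
  have h3 : g x ≤ g a := hanti (Set.left_mem_Icc.mpr hab) hx hax
  have h4 : g a ≤ 0 := mul_nonpos_of_nonpos_of_nonneg (by linarith) (Real.exp_nonneg _)
  have h5 : (y x - φ x) * Real.exp (K * x) ≤ 0 := le_trans h3 h4
  nlinarith [Real.exp_pos (K * x)]

lemma comp_lt_of_deriv {y φ y' φ' : ℝ → ℝ} {a b K : ℝ}
    (hy : ContinuousOn y (Set.Icc a b)) (hφ : ContinuousOn φ (Set.Icc a b))
    (hyd : ∀ x ∈ Set.Ioo a b, HasDerivAt y (y' x) x)
    (hφd : ∀ x ∈ Set.Ioo a b, HasDerivAt φ (φ' x) x)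
    (hini : y a ≤ φ a)
    (hcomp : ∀ x ∈ Set.Ioo a b, y' x + K * y x < φ' x + K * φ x) :
    ∀ x ∈ Set.Ioc a b, y x < φ x := by
  intro x hx
  have hax : a < x := hx.1
  have hab : a ≤ b := hax.le.trans hx.2
  set g : ℝ → ℝ := fun t => (y t - φ t) * Real.exp (K * t) with hgdef
  have hgc : ContinuousOn g (Set.Icc a b) :=
    (hy.sub hφ).mul ((Real.continuous_exp.comp (continuous_const.mul continuous_id)).continuousOn)
  have hder : ∀ t ∈ Set.Ioo a b,
      HasDerivAt g ((y' t + K * y t - (φ' t + K * φ t)) * Real.exp (K * t)) t := by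
    intro t ht
    have h1 : HasDerivAt (fun u : ℝ => Real.exp (K * u)) (Real.exp (K * t) * (K * 1)) t :=
      (HasDerivAt.const_mul K (hasDerivAt_id t)).exp
    have h2 := ((hyd t ht).sub (hφd t ht)).mul h1
    refine h2.congr_deriv ?_
    simp only [Pi.sub_apply]
    ring
  have hanti : StrictAntiOn g (Set.Icc a b) := by
    apply strictAntiOn_of_deriv_neg (convex_Icc a b) hgc
    intro t ht
    rw [interior_Icc] at ht
    rw [(hder t ht).deriv]
    have h1 := hcomp t ht
    exact mul_neg_of_neg_of_pos (by linarith) (Real.exp_pos _)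
  have h3 : g x < g a := hanti (Set.left_mem_Icc.mpr hab) ⟨hax.le, hx.2⟩ hax
  have h4 : g a ≤ 0 := mul_nonpos_of_nonpos_of_nonneg (by linarith) (Real.exp_nonneg _)
  have h5 : (y x - φ x) * Real.exp (K * x) < 0 := lt_of_lt_of_le h3 h4
  nlinarith [Real.exp_pos (K * x)]

lemma exp_sub_exp_mono {p q : ℝ} (hq : 0 ≤ q) (hpq : q ≤ p) {s t : ℝ} (hs : 0 ≤ s) (hst : s ≤ t) :
    Real.exp (p * s) - Real.exp (q * s) ≤ Real.exp (p * t) - Real.exp (q * t) := by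
  have H : MonotoneOn (fun u => Real.exp (p * u) - Real.exp (q * u)) (Set.Ici 0) := by
    apply monotoneOn_of_deriv_nonneg (convex_Ici 0)
    · exact ((Real.continuous_exp.comp (continuous_const.mul continuous_id)).sub
        (Real.continuous_exp.comp (continuous_const.mul continuous_id))).continuousOn
    · intro u _
      exact (((HasDerivAt.const_mul p (hasDerivAt_id u)).exp).sub
        ((HasDerivAt.const_mul q (hasDerivAt_id u)).exp)).differentiableAt.differentiableWithinAt
    · intro u hu
      rw [interior_Ici] at hu
      have hd : HasDerivAt (fun u => Real.exp (p * u) - Real.exp (q * u))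
          (Real.exp (p * u) * (p * 1) - Real.exp (q * u) * (q * 1)) u :=
        ((HasDerivAt.const_mul p (hasDerivAt_id u)).exp).sub
          ((HasDerivAt.const_mul q (hasDerivAt_id u)).exp)
      rw [hd.deriv]
      have h1 : Real.exp (q * u) ≤ Real.exp (p * u) :=
        Real.exp_le_exp.mpr (by nlinarith [(Set.mem_Ioi.mp hu).le])
      nlinarith [Real.exp_pos (q * u), Real.exp_pos (p * u)]
  exact H hs (hs.trans hst) hst

lemma sit_step (r ρ β μM μF μS γ k τ a S0 : ℝ) (MS M F : ℝ → ℝ)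
    (hr0 : 0 < r) (hr1 : r < 1) (hρ : 0 < ρ) (hβ : 0 < β)
    (hμF : 0 < μF) (hμ1 : μF ≤ μM) (hμ2 : μM ≤ μS)
    (hγ : 0 < γ) (hτ : 0 < τ)
    (hk0 : 0 < k) (hk1 : k < 1) (hε : 0 < μF - (1 - r) * ρ * k)
    (hS0nn : 0 ≤ S0)
    (hMS : ∀ t ∈ Set.Ioc a (a + τ), MS t = S0 * Real.exp (-(μS * (t - a))))
    (hMc : ContinuousOn M (Set.Icc a (a + τ)))
    (hFc : ContinuousOn F (Set.Icc a (a + τ)))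
    (hM0 : ∀ t ∈ Set.Icc a (a + τ), 0 ≤ M t)
    (hF0 : ∀ t ∈ Set.Icc a (a + τ), 0 ≤ F t)
    (hode : ∀ t ∈ Set.Ioo a (a + τ),
      HasDerivAt M (r * ρ * (F t * M t / (M t + γ * MS t)) *
        Real.exp (-(β * (M t + F t))) - μM * M t) t ∧
      HasDerivAt F ((1 - r) * ρ * (F t * M t / (M t + γ * MS t)) *
        Real.exp (-(β * (M t + F t))) - μF * F t) t)
    (hS0ge : ((1 - k) / k) * Real.exp ((μS - μM) * τ) * M a
        + (r * ρ * (1 - k) / (μM - μF + (1 - r) * ρ * k))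
          * (Real.exp ((μS - μF + (1 - r) * ρ * k) * τ) - Real.exp ((μS - μM) * τ)) * F a
        ≤ γ * S0) :
    F (a + τ) ≤ F a * Real.exp (-((μF - (1 - r) * ρ * k) * τ)) ∧
    M (a + τ) ≤ M a * Real.exp (-(μM * τ))
      + (r * ρ * k / (μM - μF + (1 - r) * ρ * k)) * F a
        * (Real.exp (-((μF - (1 - r) * ρ * k) * τ)) - Real.exp (-(μM * τ))) := by
  have h1r : 0 < 1 - r := by linarith
  have hμM : 0 < μM := lt_of_lt_of_le hμF hμ1
  set ε : ℝ := μF - (1 - r) * ρ * k with hεdef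
  set D : ℝ := r * ρ * k / (μM - μF + (1 - r) * ρ * k) with hDdef
  have hεμM : ε < μM := by
    have : 0 < (1 - r) * ρ * k := by positivity
    simp only [hεdef]; linarith
  have hεμF : ε < μF := by
    have : 0 < (1 - r) * ρ * k := by positivity
    simp only [hεdef]; linarith
  have hed : 0 < μM - μF + (1 - r) * ρ * k := by
    have : 0 < (1 - r) * ρ * k := by positivity
    linarith
  have hDpos : 0 < D := by
    simp only [hDdef]; positivity
  have hDval : D * (μM - ε) = r * ρ * k := by
    simp only [hDdef, hεdef]
    rw [div_mul_eq_mul_div, div_eq_iff hed.ne']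
    ring
  have haa : a < a + τ := by linarith
  have hmemIcc : ∀ t ∈ Set.Ioo a (a + τ), t ∈ Set.Icc a (a + τ) := fun t ht => ⟨ht.1.le, ht.2.le⟩
  have hMSnn : ∀ t ∈ Set.Ioc a (a + τ), 0 ≤ MS t := by
    intro t ht; rw [hMS t ht]; positivity
  -- basic bound Φ·E ≤ F and Φ ≥ 0
  have hframe : ∀ t ∈ Set.Ioo a (a + τ),
      0 ≤ F t * M t / (M t + γ * MS t) ∧
      F t * M t / (M t + γ * MS t) * Real.exp (-(β * (M t + F t))) ≤ F t := by
    intro t ht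
    have hMt := hM0 t (hmemIcc t ht)
    have hFt := hF0 t (hmemIcc t ht)
    have hMSt := hMSnn t ⟨ht.1, ht.2.le⟩
    have hden : 0 ≤ M t + γ * MS t := by positivity
    have hΦnn : 0 ≤ F t * M t / (M t + γ * MS t) := div_nonneg (by positivity) hden
    refine ⟨hΦnn, ?_⟩
    have hE1 : Real.exp (-(β * (M t + F t))) ≤ 1 := Real.exp_le_one_iff.mpr (by nlinarith)
    have hΦF : F t * M t / (M t + γ * MS t) ≤ F t := by
      rcases eq_or_lt_of_le hden with h | h
      · rw [← h]; simpa using hFt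
      · rw [div_le_iff₀ h]; nlinarith [mul_nonneg hFt (mul_nonneg hγ.le hMSt)]
    nlinarith [mul_le_of_le_one_right hΦnn hE1]
  -- bound Φ·E ≤ k·F under the invariant
  have hΦk : ∀ t ∈ Set.Ioo a (a + τ), (1 - k) / k * M t ≤ γ * MS t →
      F t * M t / (M t + γ * MS t) * Real.exp (-(β * (M t + F t))) ≤ k * F t := by
    intro t ht hinv
    have hMt := hM0 t (hmemIcc t ht)
    have hFt := hF0 t (hmemIcc t ht)
    have hMSt := hMSnn t ⟨ht.1, ht.2.le⟩
    have hden : 0 ≤ M t + γ * MS t := by positivity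
    have hΦnn : 0 ≤ F t * M t / (M t + γ * MS t) := div_nonneg (by positivity) hden
    have hE1 : Real.exp (-(β * (M t + F t))) ≤ 1 := Real.exp_le_one_iff.mpr (by nlinarith)
    have hΦk' : F t * M t / (M t + γ * MS t) ≤ k * F t := by
      rcases eq_or_lt_of_le hden with h | h
      · rw [← h]; simp; positivity
      · rw [div_le_iff₀ h]
        have h2 : (1 - k) * M t ≤ k * (γ * MS t) := by
          have h3 := mul_le_mul_of_nonneg_left hinv hk0.le
          calc (1 - k) * M t = k * ((1 - k) / k * M t) := by field_simp
          _ ≤ k * (γ * MS t) := h3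
        nlinarith
    nlinarith [mul_le_of_le_one_right hΦnn hE1]
  -- strict bound Φ·E < k·F under invariant when F > 0
  have hΦks : ∀ t ∈ Set.Ioo a (a + τ), (1 - k) / k * M t ≤ γ * MS t → 0 < F t →
      F t * M t / (M t + γ * MS t) * Real.exp (-(β * (M t + F t))) < k * F t := by
    intro t ht hinv hFt
    have hMt := hM0 t (hmemIcc t ht)
    have hMSt := hMSnn t ⟨ht.1, ht.2.le⟩
    rcases eq_or_lt_of_le hMt with hMz | hMz
    · rw [← hMz]; simp; positivity
    · have hden : 0 < M t + γ * MS t := by positivity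
      have hE1 : Real.exp (-(β * (M t + F t))) < 1 := Real.exp_lt_one_iff.mpr (by nlinarith)
      have hΦpos : 0 < F t * M t / (M t + γ * MS t) := div_pos (by positivity) hden
      have hΦk' : F t * M t / (M t + γ * MS t) ≤ k * F t := by
        rw [div_le_iff₀ hden]
        have h2 : (1 - k) * M t ≤ k * (γ * MS t) := by
          have h3 := mul_le_mul_of_nonneg_left hinv hk0.le
          calc (1 - k) * M t = k * ((1 - k) / k * M t) := by field_simp
          _ ≤ k * (γ * MS t) := h3
        nlinarith
      nlinarith [mul_lt_of_lt_one_right hΦpos hE1]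
  -- continuity of the comparison functions
  have hexpc : ∀ c : ℝ, ContinuousOn (fun t : ℝ => Real.exp (-(c * (t - a)))) (Set.Icc a (a + τ)) := by
    intro c
    exact (Real.continuous_exp.comp ((continuous_const.mul (continuous_id.sub continuous_const)).neg)).continuousOn
  have hexpd : ∀ (c : ℝ) (t : ℝ), HasDerivAt (fun t : ℝ => Real.exp (-(c * (t - a))))
      (Real.exp (-(c * (t - a))) * -(c * 1)) t := by
    intro c t
    exact ((((hasDerivAt_id t).sub_const a).const_mul c).neg).exp
  -- combined Gronwall bounds given the invariant up to σ
  have gronFM : ∀ σ ∈ Set.Icc (0:ℝ) τ,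
      (∀ u : ℝ, 0 < u → u < σ → (1 - k) / k * M (a + u) ≤ γ * S0 * Real.exp (-(μS * u))) →
      (∀ s ∈ Set.Icc (0:ℝ) σ, F (a + s) ≤ F a * Real.exp (-(ε * s))) ∧
      (∀ s ∈ Set.Icc (0:ℝ) σ, M (a + s) ≤ M a * Real.exp (-(μM * s))
          + D * F a * (Real.exp (-(ε * s)) - Real.exp (-(μM * s)))) := by
    intro σ hσ hinv
    have hsub : Set.Icc a (a + σ) ⊆ Set.Icc a (a + τ) := Set.Icc_subset_Icc_right (by linarith [hσ.2])
    have hsubo : Set.Ioo a (a + σ) ⊆ Set.Ioo a (a + τ) := Set.Ioo_subset_Ioo_right (by linarith [hσ.2])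
    have hinv' : ∀ t ∈ Set.Ioo a (a + σ), (1 - k) / k * M t ≤ γ * MS t := by
      intro t ht
      have h1 := hinv (t - a) (by linarith [ht.1]) (by linarith [ht.2])
      have h2 : a + (t - a) = t := by ring
      rw [h2] at h1
      have h3 : MS t = S0 * Real.exp (-(μS * (t - a))) := hMS t ⟨(hsubo ht).1, (hsubo ht).2.le⟩
      rw [h3]; linarith [h1]
    have hFbd : ∀ x ∈ Set.Icc a (a + σ), F x ≤ F a * Real.exp (-(ε * (x - a))) := by
      apply comp_le_of_deriv (K := ε)
        (y' := fun t => (1 - r) * ρ * (F t * M t / (M t + γ * MS t)) *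
          Real.exp (-(β * (M t + F t))) - μF * F t)
        (φ' := fun t => F a * (Real.exp (-(ε * (t - a))) * -(ε * 1)))
        (hFc.mono hsub) (((hexpc ε).mono hsub).const_smul (F a) |>.congr ?_)
        (fun t ht => (hode t (hsubo ht)).2)
        (fun t ht => (hexpd ε t).const_mul (F a))
        (by simp) ?_
      · intro x _; simp [smul_eq_mul]
      · intro t ht
        have hb := hΦk t (hsubo ht) (hinv' t ht)
        have hFt := hF0 t (hmemIcc t (hsubo ht))
        have h1 : ε - μF = -((1 - r) * ρ * k) := by simp only [hεdef]; ring
        nlinarith [mul_le_mul_of_nonneg_left hb (by positivity : (0:ℝ) ≤ (1 - r) * ρ)]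
    constructor
    · intro s hs
      have := hFbd (a + s) ⟨by linarith [hs.1], by linarith [hs.2]⟩
      simpa using this
    · intro s hs
      have hMbd : ∀ x ∈ Set.Icc a (a + σ), M x ≤ M a * Real.exp (-(μM * (x - a)))
          + D * F a * (Real.exp (-(ε * (x - a))) - Real.exp (-(μM * (x - a)))) := by
        apply comp_le_of_deriv (K := μM)
          (y' := fun t => r * ρ * (F t * M t / (M t + γ * MS t)) *
            Real.exp (-(β * (M t + F t))) - μM * M t)
          (φ' := fun t => M a * (Real.exp (-(μM * (t - a))) * -(μM * 1))
            + D * F a * (Real.exp (-(ε * (t - a))) * -(ε * 1)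
              - Real.exp (-(μM * (t - a))) * -(μM * 1)))
          (hMc.mono hsub) ?_ (fun t ht => (hode t (hsubo ht)).1)
          (fun t ht => ((hexpd μM t).const_mul (M a)).add
            (((hexpd ε t).sub (hexpd μM t)).const_mul (D * F a)))
          (by simp) ?_
        · apply ContinuousOn.add
          · exact (((hexpc μM).mono hsub).const_smul (M a)).congr (by intro x _; simp [smul_eq_mul])
          · exact ((((hexpc ε).mono hsub).sub ((hexpc μM).mono hsub)).const_smul (D * F a)).congr
              (by intro x _; simp [smul_eq_mul])
        · intro t ht
          have hb := hΦk t (hsubo ht) (hinv' t ht)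
          have hFt' : F t ≤ F a * Real.exp (-(ε * (t - a))) := hFbd t ⟨ht.1.le, ht.2.le⟩
          have hrhs : M a * (Real.exp (-(μM * (t - a))) * -(μM * 1))
              + D * F a * (Real.exp (-(ε * (t - a))) * -(ε * 1)
                - Real.exp (-(μM * (t - a))) * -(μM * 1))
              + μM * (M a * Real.exp (-(μM * (t - a)))
                + D * F a * (Real.exp (-(ε * (t - a))) - Real.exp (-(μM * (t - a)))))
              = D * (μM - ε) * (F a * Real.exp (-(ε * (t - a)))) := by ring
          simp only [Pi.add_apply, Pi.sub_apply]
          rw [hrhs, hDval]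
          have hkF : r * ρ * (F t * M t / (M t + γ * MS t)) * Real.exp (-(β * (M t + F t)))
              ≤ r * ρ * k * F t := by
            nlinarith [mul_le_mul_of_nonneg_left hb (by positivity : (0:ℝ) ≤ r * ρ)]
          have h2 : r * ρ * k * F t ≤ r * ρ * k * (F a * Real.exp (-(ε * (t - a)))) := by
            apply mul_le_mul_of_nonneg_left hFt' (by positivity)
          linarith
      have := hMbd (a + s) ⟨by linarith [hs.1], by linarith [hs.2]⟩
      simpa using this

  have hfinal : (∀ u : ℝ, 0 < u → u < τ → (1 - k) / k * M (a + u) ≤ γ * S0 * Real.exp (-(μS * u))) →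
      F (a + τ) ≤ F a * Real.exp (-(ε * τ)) ∧
      M (a + τ) ≤ M a * Real.exp (-(μM * τ))
        + D * F a * (Real.exp (-(ε * τ)) - Real.exp (-(μM * τ))) := by
    intro hin
    obtain ⟨h1, h2⟩ := gronFM τ ⟨hτ.le, le_refl τ⟩ hin
    exact ⟨h1 τ ⟨hτ.le, le_refl τ⟩, h2 τ ⟨hτ.le, le_refl τ⟩⟩
  have haIcc : a ∈ Set.Icc a (a + τ) := ⟨le_refl a, by linarith⟩
  have hMa := hM0 a haIcc
  rcases eq_or_lt_of_le (hF0 a haIcc) with hfa | hfa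
  · -- case F a = 0 : then F ≡ 0 and M decays
    have hFz : ∀ x ∈ Set.Icc a (a + τ), F x ≤ 0 := by
      apply comp_le_of_deriv (K := -((1 - r) * ρ))
        (y' := fun t => (1 - r) * ρ * (F t * M t / (M t + γ * MS t)) *
          Real.exp (-(β * (M t + F t))) - μF * F t)
        (φ := fun _ => (0:ℝ)) (φ' := fun _ => (0:ℝ))
        hFc continuousOn_const (fun t ht => (hode t ht).2) (fun t _ => hasDerivAt_const t 0)
        (hfa.ge) ?_
      intro t ht
      have h1 := (hframe t ht).2
      have hFt := hF0 t (hmemIcc t ht)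
      nlinarith [mul_le_mul_of_nonneg_left h1 (le_of_lt (by positivity : (0:ℝ) < (1 - r) * ρ))]
    have hFeq : ∀ x ∈ Set.Icc a (a + τ), F x = 0 := fun x hx => le_antisymm (hFz x hx) (hF0 x hx)
    have hMz : ∀ x ∈ Set.Icc a (a + τ), M x ≤ M a * Real.exp (-(μM * (x - a))) := by
      apply comp_le_of_deriv (K := μM)
        (y' := fun t => r * ρ * (F t * M t / (M t + γ * MS t)) *
          Real.exp (-(β * (M t + F t))) - μM * M t)
        (φ' := fun t => M a * (Real.exp (-(μM * (t - a))) * -(μM * 1)))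
        hMc (((hexpc μM).const_smul (M a)).congr (by intro x _; simp [smul_eq_mul]))
        (fun t ht => (hode t ht).1) (fun t _ => (hexpd μM t).const_mul (M a))
        (by simp) ?_
      intro t ht
      rw [hFeq t (hmemIcc t ht)]
      have hr : M a * (Real.exp (-(μM * (t - a))) * -(μM * 1))
          + μM * (M a * Real.exp (-(μM * (t - a)))) = 0 := by ring
      simp only [zero_mul, zero_div, mul_zero]
      linarith
    have hFa0 : F a = 0 := hfa.symm
    constructor
    · rw [hFeq (a + τ) ⟨by linarith, le_refl _⟩, hFa0]
      simp
    · have h2 := hMz (a + τ) ⟨by linarith, le_refl _⟩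
      rw [add_sub_cancel_left] at h2
      rw [hFa0]
      simpa using h2
  · -- case 0 < F a : positivity of F, then bootstrap invariant
    have hFpos : ∀ x ∈ Set.Icc a (a + τ), 0 < F x := by
      have hcmp : ∀ t ∈ Set.Ioo a (a + τ),
          F a * (Real.exp (-(μF * (t - a))) * -(μF * 1)) + μF * (F a * Real.exp (-(μF * (t - a))))
          ≤ ((1 - r) * ρ * (F t * M t / (M t + γ * MS t)) *
              Real.exp (-(β * (M t + F t))) - μF * F t) + μF * F t := by
        intro t ht
        have h1 := (hframe t ht).1
        have hE := Real.exp_nonneg (-(β * (M t + F t)))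
        nlinarith [mul_nonneg (mul_nonneg (by positivity : (0:ℝ) ≤ (1 - r) * ρ) h1) hE]
      have hge := comp_le_of_deriv (K := μF)
        (y := fun t => F a * Real.exp (-(μF * (t - a)))) (φ := F)
        (y' := fun t => F a * (Real.exp (-(μF * (t - a))) * -(μF * 1)))
        (φ' := fun t => (1 - r) * ρ * (F t * M t / (M t + γ * MS t)) *
          Real.exp (-(β * (M t + F t))) - μF * F t)
        (((hexpc μF).const_smul (F a)).congr (by intro x _; simp [smul_eq_mul])) hFc
        (fun t _ => (hexpd μF t).const_mul (F a))
        (fun t ht => (hode t ht).2)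
        (by simp) hcmp
      intro x hx
      calc (0:ℝ) < F a * Real.exp (-(μF * (x - a))) := by positivity
        _ ≤ F x := hge x hx
    set c : ℝ := r * ρ * (1 - k) / (μM - μF + (1 - r) * ρ * k) with hcdef
    have hcpos : 0 < c := by
      simp only [hcdef]
      exact div_pos (mul_pos (mul_pos hr0 hρ) (by linarith)) hed
    have hcD : (1 - k) / k * D = c := by
      simp only [hcdef, hDdef]; field_simp
    have hkk : 0 < (1 - k) / k := div_pos (by linarith) hk0
    have hee : μS - μF + (1 - r) * ρ * k = μS - ε := by simp only [hεdef]; ring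
    rw [hee] at hS0ge
    have hexpdiffpos : 0 < Real.exp ((μS - ε) * τ) - Real.exp ((μS - μM) * τ) := by
      have h1 : (μS - μM) * τ < (μS - ε) * τ := by nlinarith
      linarith [Real.exp_lt_exp.mpr h1]
    have hA1 : 1 ≤ Real.exp ((μS - μM) * τ) := Real.one_le_exp (by nlinarith)
    have key : ∀ s ∈ Set.Icc (0:ℝ) τ,
        (1 - k) / k * M (a + s) ≤ γ * S0 * Real.exp (-(μS * s)) := by
      by_contra hcon
      push_neg at hcon
      obtain ⟨s0, hs00, hs0lt⟩ := hcon
      set V : Set ℝ := {s | s ∈ Set.Icc (0:ℝ) τ ∧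
        γ * S0 * Real.exp (-(μS * s)) < (1 - k) / k * M (a + s)} with hVdef
      have hVne : V.Nonempty := ⟨s0, hs00, hs0lt⟩
      have hVsub : V ⊆ Set.Icc 0 τ := fun s hs => hs.1
      have hVbdd : BddBelow V := ⟨0, fun s hs => (hVsub hs).1⟩
      have hσcl : sInf V ∈ closure V := csInf_mem_closure hVne hVbdd
      set σ : ℝ := sInf V with hσdef
      have hσIcc : σ ∈ Set.Icc (0:ℝ) τ := closure_minimal hVsub isClosed_Icc hσcl
      have hdc : ContinuousOn (fun s => (1 - k) / k * M (a + s)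
          - γ * S0 * Real.exp (-(μS * s))) (Set.Icc 0 τ) := by
        have hMcomp : ContinuousOn (fun s : ℝ => M (a + s)) (Set.Icc 0 τ) := by
          apply hMc.comp (continuous_const.add continuous_id).continuousOn
          intro s hs
          simp only [Set.mem_Icc, id_eq, Pi.add_apply] at hs ⊢
          constructor
          · linarith [hs.1]
          · linarith [hs.2]
        exact (continuousOn_const.mul hMcomp).sub
          (continuous_const.mul (Real.continuous_exp.comp
            ((continuous_const.mul continuous_id).neg))).continuousOn
      have hdσ : 0 ≤ (1 - k) / k * M (a + σ) - γ * S0 * Real.exp (-(μS * σ)) := by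
        have hct : Filter.Tendsto (fun s => (1 - k) / k * M (a + s)
            - γ * S0 * Real.exp (-(μS * s))) (nhdsWithin σ V)
            (nhds ((1 - k) / k * M (a + σ) - γ * S0 * Real.exp (-(μS * σ)))) :=
          (hdc.continuousWithinAt hσIcc).mono hVsub
        have hne : (nhdsWithin σ V).NeBot := mem_closure_iff_nhdsWithin_neBot.mp hσcl
        refine ge_of_tendsto hct ?_
        refine Filter.eventually_of_mem self_mem_nhdsWithin (fun s hs => ?_)
        obtain ⟨hs1, hs2⟩ := hs
        linarith
      have hσpos : 0 < σ := by
        rcases eq_or_lt_of_le hσIcc.1 with h | h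
        · exfalso
          rw [← h] at hdσ
        -- at 0 : (1-k)/k * M a - γ S0 < 0
          simp only [add_zero, mul_zero, neg_zero, Real.exp_zero, mul_one] at hdσ
          nlinarith [mul_nonneg (mul_nonneg hkk.le hMa) (sub_nonneg.mpr hA1),
            mul_pos (mul_pos hcpos hexpdiffpos) hfa]
        · exact h
      have hinv : ∀ u : ℝ, 0 < u → u < σ →
          (1 - k) / k * M (a + u) ≤ γ * S0 * Real.exp (-(μS * u)) := by
        intro u hu0 huσ
        have hnm : u ∉ V := notMem_of_lt_csInf (by rw [← hσdef]; exact huσ) hVbdd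
        by_contra hcc
        push_neg at hcc
        exact hnm ⟨⟨hu0.le, by linarith [hσIcc.2]⟩, hcc⟩
      obtain ⟨hFw, hMw⟩ := gronFM σ ⟨hσIcc.1, hσIcc.2⟩ hinv
      have hsub : Set.Icc a (a + σ) ⊆ Set.Icc a (a + τ) :=
        Set.Icc_subset_Icc_right (by linarith [hσIcc.2])
      have hsubo : Set.Ioo a (a + σ) ⊆ Set.Ioo a (a + τ) :=
        Set.Ioo_subset_Ioo_right (by linarith [hσIcc.2])
      have hinv' : ∀ t ∈ Set.Ioo a (a + σ), (1 - k) / k * M t ≤ γ * MS t := by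
        intro t ht
        have h1 := hinv (t - a) (by linarith [ht.1]) (by linarith [ht.2])
        have h2 : a + (t - a) = t := by ring
        rw [h2] at h1
        rw [hMS t ⟨(hsubo ht).1, (hsubo ht).2.le⟩]
        linarith
      have hFs : ∀ x ∈ Set.Ioc a (a + σ), F x < F a * Real.exp (-(ε * (x - a))) := by
        apply comp_lt_of_deriv (K := ε)
          (y' := fun t => (1 - r) * ρ * (F t * M t / (M t + γ * MS t)) *
            Real.exp (-(β * (M t + F t))) - μF * F t)
          (φ' := fun t => F a * (Real.exp (-(ε * (t - a))) * -(ε * 1)))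
          (hFc.mono hsub)
          ((((hexpc ε).mono hsub).const_smul (F a)).congr (by intro x _; simp [smul_eq_mul]))
          (fun t ht => (hode t (hsubo ht)).2)
          (fun t _ => (hexpd ε t).const_mul (F a))
          (by simp) ?_
        intro t ht
        have hb := hΦks t (hsubo ht) (hinv' t ht) (hFpos t (hsub ⟨ht.1.le, ht.2.le⟩))
        have hm : ε - μF = -((1 - r) * ρ * k) := by simp only [hεdef]; ring
        nlinarith [mul_lt_mul_of_pos_left hb (by positivity : (0:ℝ) < (1 - r) * ρ)]
      have hMs : M (a + σ) < M a * Real.exp (-(μM * σ))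
          + D * F a * (Real.exp (-(ε * σ)) - Real.exp (-(μM * σ))) := by
        have h := comp_lt_of_deriv (K := μM)
          (y' := fun t => r * ρ * (F t * M t / (M t + γ * MS t)) *
            Real.exp (-(β * (M t + F t))) - μM * M t)
          (φ := fun t => M a * Real.exp (-(μM * (t - a)))
            + D * F a * (Real.exp (-(ε * (t - a))) - Real.exp (-(μM * (t - a)))))
          (φ' := fun t => M a * (Real.exp (-(μM * (t - a))) * -(μM * 1))
            + D * F a * (Real.exp (-(ε * (t - a))) * -(ε * 1)
              - Real.exp (-(μM * (t - a))) * -(μM * 1)))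
          (hMc.mono hsub) ?_ (fun t ht => (hode t (hsubo ht)).1)
          (fun t _ => ((hexpd μM t).const_mul (M a)).add
            (((hexpd ε t).sub (hexpd μM t)).const_mul (D * F a)))
          (by simp) ?_ (a + σ) ⟨by linarith, le_refl _⟩
        · simpa using h
        · apply ContinuousOn.add
          · exact (((hexpc μM).mono hsub).const_smul (M a)).congr (by intro x _; simp [smul_eq_mul])
          · exact ((((hexpc ε).mono hsub).sub ((hexpc μM).mono hsub)).const_smul
              (D * F a)).congr (by intro x _; simp [smul_eq_mul])
        · intro t ht
          have hb := hΦk t (hsubo ht) (hinv' t ht)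
          have hFt' : F t < F a * Real.exp (-(ε * (t - a))) := hFs t ⟨ht.1, ht.2.le⟩
          have hrhs : M a * (Real.exp (-(μM * (t - a))) * -(μM * 1))
              + D * F a * (Real.exp (-(ε * (t - a))) * -(ε * 1)
                - Real.exp (-(μM * (t - a))) * -(μM * 1))
              + μM * (M a * Real.exp (-(μM * (t - a)))
                + D * F a * (Real.exp (-(ε * (t - a))) - Real.exp (-(μM * (t - a)))))
              = D * (μM - ε) * (F a * Real.exp (-(ε * (t - a)))) := by ring
          rw [hrhs, hDval]
          have hkF : r * ρ * (F t * M t / (M t + γ * MS t)) * Real.exp (-(β * (M t + F t)))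
              ≤ r * ρ * k * F t := by
            nlinarith [mul_le_mul_of_nonneg_left hb (by positivity : (0:ℝ) ≤ r * ρ)]
          have h2 : r * ρ * k * F t < r * ρ * k * (F a * Real.exp (-(ε * (t - a)))) :=
            mul_lt_mul_of_pos_left hFt' (by positivity)
          linarith
      -- now derive the contradiction
      set X : ℝ := Real.exp (-(μM * σ)) with hXdef
      set Ye : ℝ := Real.exp (-(ε * σ)) with hYedef
      set Z : ℝ := Real.exp (-(μS * σ)) with hZdef
      set E1 : ℝ := Real.exp ((μS - μM) * τ) with hE1def
      set Eτ : ℝ := Real.exp ((μS - ε) * τ) with hEτdef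
      set W1 : ℝ := Real.exp ((μS - ε) * σ) with hW1def
      set W2 : ℝ := Real.exp ((μS - μM) * σ) with hW2def
      have hZnn : 0 ≤ Z := Real.exp_nonneg _
      have g2 : X ≤ E1 * Z := by
        rw [hXdef, hE1def, hZdef, ← Real.exp_add]
        apply Real.exp_le_exp.mpr
        nlinarith [mul_le_mul_of_nonneg_left hσIcc.2 (sub_nonneg.mpr hμ2)]
      have g3 : Ye - X = (W1 - W2) * Z := by
        simp only [hXdef, hYedef, hZdef, hW1def, hW2def, sub_mul, ← Real.exp_add]
        ring_nf
      have g4 : W1 - W2 ≤ Eτ - E1 :=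
        exp_sub_exp_mono (by linarith) (by linarith) hσIcc.1 hσIcc.2
      have hchain : (1 - k) / k * M (a + σ) < γ * S0 * Z := by
        calc (1 - k) / k * M (a + σ)
            < (1 - k) / k * (M a * X + D * F a * (Ye - X)) := mul_lt_mul_of_pos_left hMs hkk
          _ = (1 - k) / k * M a * X + c * F a * ((W1 - W2) * Z) := by rw [g3, ← hcD]; ring
          _ ≤ (1 - k) / k * M a * (E1 * Z) + c * F a * ((Eτ - E1) * Z) := by
              have u1 : (1 - k) / k * M a * X ≤ (1 - k) / k * M a * (E1 * Z) :=
                mul_le_mul_of_nonneg_left g2 (mul_nonneg hkk.le hMa)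
              have u2 : c * F a * ((W1 - W2) * Z) ≤ c * F a * ((Eτ - E1) * Z) := by
                apply mul_le_mul_of_nonneg_left _ (mul_nonneg hcpos.le hfa.le)
                exact mul_le_mul_of_nonneg_right g4 hZnn
              linarith
          _ = ((1 - k) / k * E1 * M a + c * (Eτ - E1) * F a) * Z := by ring
          _ ≤ γ * S0 * Z := mul_le_mul_of_nonneg_right hS0ge hZnn
      linarith
    exact hfinal (fun u hu0 huτ => key u ⟨hu0.le, huτ.le⟩)



theorem stmt_14 (r ρ β μM μF μS γ τ k : ℝ)
    (hr0 : 0 < r) (hr1 : r < 1) (hρ : 0 < ρ) (hβ : 0 < β)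
    (hμM : 0 < μM) (hμF : 0 < μF) (hμS : 0 < μS) (hγ : 0 < γ)
    (hμ1 : μF ≤ μM) (hμ2 : μM ≤ μS) (hτ : 0 < τ)
    (hk0 : 0 < k) (hk1 : k < μF / ((1 - r) * ρ))
    (Λ : ℕ → ℝ) (MS M F : ℝ → ℝ)
    (hsys : ImpulsiveSIT r ρ β μM μF μS γ τ Λ MS M F)
    (hlow : ∀ n : ℕ, Λ n ≥ -(1 / τ) * MS ((n : ℝ) * τ) + (1 / (γ * τ)) *
      (((1 - k) / k) * Real.exp ((μS - μM) * τ) * M ((n : ℝ) * τ) +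
       (r * ρ * (1 - k) / (μM - μF + (1 - r) * ρ * k)) *
         (Real.exp ((μS - μF + (1 - r) * ρ * k) * τ) -
           Real.exp ((μS - μM) * τ)) * F ((n : ℝ) * τ)))
    (hup : ∀ n : ℕ, Λ n ≤ (1 / (γ * τ)) *
      (((1 - k) / k) * Real.exp ((μS - μM) * τ) * M ((n : ℝ) * τ) +
       (r * ρ * (1 - k) / (μM - μF + (1 - r) * ρ * k)) *
         (Real.exp ((μS - μF + (1 - r) * ρ * k) * τ) -
           Real.exp ((μS - μM) * τ)) * F ((n : ℝ) * τ))) :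
    Summable Λ := by
  obtain ⟨hΛnn, hMS00, hMSeq, hMcont, hFcont, hMnn, hFnn, hODE⟩ := hsys
  have h1r : 0 < 1 - r := by linarith
  have hε : 0 < μF - (1 - r) * ρ * k := by
    have h1 : k * ((1 - r) * ρ) < μF := (lt_div_iff₀ (by positivity)).mp hk1
    nlinarith
  have hed : 0 < μM - μF + (1 - r) * ρ * k := by nlinarith [mul_pos (mul_pos h1r hρ) hk0]
  have hexpmono : Real.exp ((μS - μM) * τ) ≤ Real.exp ((μS - μF + (1 - r) * ρ * k) * τ) :=
    Real.exp_le_exp.mpr (by nlinarith [mul_nonneg hed.le hτ.le])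
  have hγτ : 0 < 1 / (γ * τ) := by positivity
  have hMn : ∀ n : ℕ, 0 ≤ M ((n : ℝ) * τ) := fun n => hMnn _ (by positivity)
  have hFn : ∀ n : ℕ, 0 ≤ F ((n : ℝ) * τ) := fun n => hFnn _ (by positivity)
  rcases le_or_gt 1 k with hbig | hk1'
  · -- degenerate case k ≥ 1 : forces Λ = 0
    have hzero : ∀ n : ℕ, Λ n = 0 := by
      intro n
      refine le_antisymm ?_ (hΛnn n)
      have h1 := hup n
      have hA : (1 - k) / k * Real.exp ((μS - μM) * τ) ≤ 0 :=
        mul_nonpos_of_nonpos_of_nonneg (div_nonpos_of_nonpos_of_nonneg (by linarith) hk0.le)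
          (Real.exp_nonneg _)
      have hc : r * ρ * (1 - k) / (μM - μF + (1 - r) * ρ * k) ≤ 0 := by
        apply div_nonpos_of_nonpos_of_nonneg _ hed.le
        nlinarith [mul_nonneg (mul_pos hr0 hρ).le (sub_nonneg.mpr hbig)]
      have hX : ((1 - k) / k) * Real.exp ((μS - μM) * τ) * M ((n : ℝ) * τ)
          + (r * ρ * (1 - k) / (μM - μF + (1 - r) * ρ * k))
            * (Real.exp ((μS - μF + (1 - r) * ρ * k) * τ) - Real.exp ((μS - μM) * τ))
            * F ((n : ℝ) * τ) ≤ 0 := by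
        have t1 : ((1 - k) / k) * Real.exp ((μS - μM) * τ) * M ((n : ℝ) * τ) ≤ 0 :=
          mul_nonpos_of_nonpos_of_nonneg hA (hMn n)
        have t2 : (r * ρ * (1 - k) / (μM - μF + (1 - r) * ρ * k))
            * (Real.exp ((μS - μF + (1 - r) * ρ * k) * τ) - Real.exp ((μS - μM) * τ))
            * F ((n : ℝ) * τ) ≤ 0 :=
          mul_nonpos_of_nonpos_of_nonneg
            (mul_nonpos_of_nonpos_of_nonneg hc (by linarith)) (hFn n)
        linarith
      nlinarith
    have : Λ = fun _ => 0 := funext hzero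
    rw [this]
    exact summable_zero
  · -- main case k < 1
    set q : ℝ := Real.exp (-((μF - (1 - r) * ρ * k) * τ)) with hqdef
    set p : ℝ := Real.exp (-(μM * τ)) with hpdef
    set D : ℝ := r * ρ * k / (μM - μF + (1 - r) * ρ * k) with hDdef
    have hq0 : 0 < q := Real.exp_pos _
    have hp0 : 0 < p := Real.exp_pos _
    have hq1 : q < 1 := by
      rw [hqdef]
      exact Real.exp_lt_one_iff.mpr (by nlinarith [mul_pos hε hτ])
    have hp1 : p < 1 := by
      rw [hpdef]
      exact Real.exp_lt_one_iff.mpr (by nlinarith [mul_pos (lt_of_lt_of_le hμF hμ1) hτ])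
    have hpq : p ≤ q := by
      rw [hpdef, hqdef]
      apply Real.exp_le_exp.mpr
      nlinarith
    have hD0 : 0 < D := by rw [hDdef]; positivity
    have hkk : 0 ≤ (1 - k) / k := le_of_lt (div_pos (by linarith) hk0)
    have hc0 : 0 ≤ r * ρ * (1 - k) / (μM - μF + (1 - r) * ρ * k) :=
      le_of_lt (div_pos (mul_pos (mul_pos hr0 hρ) (by linarith)) hed)
    -- the per-step inequality
    have hstep : ∀ n : ℕ,
        F (((n : ℝ) + 1) * τ) ≤ F ((n : ℝ) * τ) * q ∧
        M (((n : ℝ) + 1) * τ) ≤ M ((n : ℝ) * τ) * p + D * F ((n : ℝ) * τ) * (q - p) := by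
      intro n
      have hτn : (0:ℝ) ≤ (n : ℝ) * τ := by positivity
      have hab : ((n : ℝ) + 1) * τ = (n : ℝ) * τ + τ := by ring
      -- the bound from hlow
      have hXnn : 0 ≤ ((1 - k) / k) * Real.exp ((μS - μM) * τ) * M ((n : ℝ) * τ)
          + (r * ρ * (1 - k) / (μM - μF + (1 - r) * ρ * k))
            * (Real.exp ((μS - μF + (1 - r) * ρ * k) * τ) - Real.exp ((μS - μM) * τ))
            * F ((n : ℝ) * τ) :=
        add_nonneg (mul_nonneg (mul_nonneg hkk (Real.exp_nonneg _)) (hMn n))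
          (mul_nonneg (mul_nonneg hc0 (by linarith)) (hFn n))
      have hS0' : (1 / γ) * (((1 - k) / k) * Real.exp ((μS - μM) * τ) * M ((n : ℝ) * τ)
          + (r * ρ * (1 - k) / (μM - μF + (1 - r) * ρ * k))
            * (Real.exp ((μS - μF + (1 - r) * ρ * k) * τ) - Real.exp ((μS - μM) * τ))
            * F ((n : ℝ) * τ))
          ≤ τ * Λ n + MS ((n : ℝ) * τ) := by
        have h := hlow n
        have h4 := mul_le_mul_of_nonneg_left h hτ.le
        have h3 : τ * (-(1 / τ) * MS ((n : ℝ) * τ) + 1 / (γ * τ) *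
            (((1 - k) / k) * Real.exp ((μS - μM) * τ) * M ((n : ℝ) * τ)
            + (r * ρ * (1 - k) / (μM - μF + (1 - r) * ρ * k))
              * (Real.exp ((μS - μF + (1 - r) * ρ * k) * τ) - Real.exp ((μS - μM) * τ))
              * F ((n : ℝ) * τ)))
            = -MS ((n : ℝ) * τ) + (1 / γ) *
            (((1 - k) / k) * Real.exp ((μS - μM) * τ) * M ((n : ℝ) * τ)
            + (r * ρ * (1 - k) / (μM - μF + (1 - r) * ρ * k))
              * (Real.exp ((μS - μF + (1 - r) * ρ * k) * τ) - Real.exp ((μS - μM) * τ))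
              * F ((n : ℝ) * τ)) := by
          field_simp
        rw [h3] at h4
        linarith
      have hS0nn : 0 ≤ τ * Λ n + MS ((n : ℝ) * τ) := by
        have := mul_nonneg (le_of_lt (by positivity : (0:ℝ) < 1 / γ)) hXnn
        linarith
      have hS0ge : ((1 - k) / k) * Real.exp ((μS - μM) * τ) * M ((n : ℝ) * τ)
          + (r * ρ * (1 - k) / (μM - μF + (1 - r) * ρ * k))
            * (Real.exp ((μS - μF + (1 - r) * ρ * k) * τ) - Real.exp ((μS - μM) * τ))
            * F ((n : ℝ) * τ) ≤ γ * (τ * Λ n + MS ((n : ℝ) * τ)) := by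
        have h5 := mul_le_mul_of_nonneg_left hS0' hγ.le
        have h6 : γ * ((1 / γ) * (((1 - k) / k) * Real.exp ((μS - μM) * τ) * M ((n : ℝ) * τ)
            + (r * ρ * (1 - k) / (μM - μF + (1 - r) * ρ * k))
              * (Real.exp ((μS - μF + (1 - r) * ρ * k) * τ) - Real.exp ((μS - μM) * τ))
              * F ((n : ℝ) * τ)))
            = ((1 - k) / k) * Real.exp ((μS - μM) * τ) * M ((n : ℝ) * τ)
            + (r * ρ * (1 - k) / (μM - μF + (1 - r) * ρ * k))
              * (Real.exp ((μS - μF + (1 - r) * ρ * k) * τ) - Real.exp ((μS - μM) * τ))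
              * F ((n : ℝ) * τ) := by
          field_simp
        rw [h6] at h5
        linarith
      have hsub : Set.Icc ((n : ℝ) * τ) ((n : ℝ) * τ + τ) ⊆ Set.Ici (0:ℝ) := by
        intro t ht
        simp only [Set.mem_Ici]
        have := ht.1
        linarith
      have hres := sit_step r ρ β μM μF μS γ k τ ((n : ℝ) * τ) (τ * Λ n + MS ((n : ℝ) * τ))
        MS M F hr0 hr1 hρ hβ hμF hμ1 hμ2 hγ hτ hk0 hk1' hε hS0nn
        (by rw [← hab]; exact hMSeq n)
        (hMcont.mono hsub) (hFcont.mono hsub)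
        (fun t ht => hMnn t (hsub ht)) (fun t ht => hFnn t (hsub ht))
        (by rw [← hab]; exact hODE n)
        hS0ge
      rw [hab]
      exact hres
    -- translate to sequences and sum up
    set u : ℕ → ℝ := fun n => M ((n : ℝ) * τ) with hudef
    set v : ℕ → ℝ := fun n => F ((n : ℝ) * τ) with hvdef
    have hun : ∀ n, 0 ≤ u n := hMn
    have hvn : ∀ n, 0 ≤ v n := hFn
    have hrec : ∀ n : ℕ, v (n + 1) ≤ v n * q ∧ u (n + 1) ≤ u n * p + D * v n * (q - p) := by
      intro n
      have hcast : ((n + 1 : ℕ) : ℝ) = (n : ℝ) + 1 := by push_cast; ring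
      constructor
      · show F (((n + 1 : ℕ) : ℝ) * τ) ≤ F ((n : ℝ) * τ) * q
        rw [hcast]
        exact (hstep n).1
      · show M (((n + 1 : ℕ) : ℝ) * τ) ≤ M ((n : ℝ) * τ) * p + D * F ((n : ℝ) * τ) * (q - p)
        rw [hcast]
        exact (hstep n).2
    set θ : ℝ := (1 + max p q) / 2 with hθdef
    have hmax1 : max p q < 1 := max_lt hp1 hq1
    have hmax0 : 0 < max p q := lt_max_of_lt_left hp0
    have hθ1 : θ < 1 := by rw [hθdef]; linarith
    have hθ0 : 0 < θ := by rw [hθdef]; linarith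
    have hpθ : p < θ := by
      have : p ≤ max p q := le_max_left p q
      rw [hθdef]; linarith
    have hqθ : q < θ := by
      have : q ≤ max p q := le_max_right p q
      rw [hθdef]; linarith
    have hCnn : 0 ≤ D * (q - p) := mul_nonneg hD0.le (by linarith)
    set α : ℝ := D * (q - p) / (θ - q) with hαdef
    have hα0 : 0 ≤ α := div_nonneg hCnn (by linarith)
    have hαval : α * (θ - q) = D * (q - p) := by
      rw [hαdef]
      exact div_mul_cancel₀ _ (ne_of_gt (sub_pos.mpr hqθ))
    set w : ℕ → ℝ := fun n => u n + α * v n with hwdef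
    have hwrec : ∀ n : ℕ, w (n + 1) ≤ θ * w n := by
      intro n
      have h1 := (hrec n).1
      have h2 := (hrec n).2
      have h3 : w (n + 1) = u (n + 1) + α * v (n + 1) := rfl
      have h4 : w n = u n + α * v n := rfl
      rw [h3, h4]
      have h5 : α * v (n + 1) ≤ α * (v n * q) := mul_le_mul_of_nonneg_left h1 hα0
      have h6 : u n * p ≤ u n * θ := mul_le_mul_of_nonneg_left hpθ.le (hun n)
      have h2' : u (n + 1) ≤ u n * p + α * (θ - q) * v n := by
        rw [hαval]
        calc u (n + 1) ≤ u n * p + D * v n * (q - p) := h2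
          _ = u n * p + D * (q - p) * v n := by ring
      calc u (n + 1) + α * v (n + 1) ≤ (u n * p + α * (θ - q) * v n) + α * (v n * q) :=
            add_le_add h2' h5
        _ = u n * p + α * θ * v n := by ring
        _ ≤ u n * θ + α * θ * v n := by linarith
        _ = θ * (u n + α * v n) := by ring
    have geo : ∀ x : ℕ → ℝ, (∀ n, x (n + 1) ≤ θ * x n) → ∀ n, x n ≤ x 0 * θ ^ n := by
      intro x hx n
      induction n with
      | zero => simp
      | succ m ih =>
        calc x (m + 1) ≤ θ * x m := hx m
          _ ≤ θ * (x 0 * θ ^ m) := mul_le_mul_of_nonneg_left ih hθ0.le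
          _ = x 0 * θ ^ (m + 1) := by ring
    have hwgeo := geo w hwrec
    have hvrec : ∀ n : ℕ, v (n + 1) ≤ θ * v n := by
      intro n
      calc v (n + 1) ≤ v n * q := (hrec n).1
        _ ≤ θ * v n := by nlinarith [hvn n]
    have hvgeo := geo v hvrec
    have hw0 : ∀ n, u n ≤ w n := by
      intro n
      have : 0 ≤ α * v n := mul_nonneg hα0 (hvn n)
      show u n ≤ u n + α * v n
      linarith
    -- final bound on Λ
    set K0 : ℝ := (1 / (γ * τ)) * (((1 - k) / k) * Real.exp ((μS - μM) * τ) * (w 0)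
      + (r * ρ * (1 - k) / (μM - μF + (1 - r) * ρ * k))
        * (Real.exp ((μS - μF + (1 - r) * ρ * k) * τ) - Real.exp ((μS - μM) * τ)) * (v 0))
      with hK0def
    have hΛle : ∀ n : ℕ, Λ n ≤ K0 * θ ^ n := by
      intro n
      have h1 := hup n
      have hu' : u n ≤ w 0 * θ ^ n := le_trans (hw0 n) (hwgeo n)
      have hv' : v n ≤ v 0 * θ ^ n := hvgeo n
      have hB := mul_nonneg hc0 (by linarith : (0:ℝ) ≤
        Real.exp ((μS - μF + (1 - r) * ρ * k) * τ) - Real.exp ((μS - μM) * τ))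
      have hA := mul_nonneg hkk (Real.exp_nonneg ((μS - μM) * τ))
      have t1 : ((1 - k) / k) * Real.exp ((μS - μM) * τ) * u n
          ≤ ((1 - k) / k) * Real.exp ((μS - μM) * τ) * (w 0 * θ ^ n) :=
        mul_le_mul_of_nonneg_left hu' hA
      have t2 : (r * ρ * (1 - k) / (μM - μF + (1 - r) * ρ * k))
          * (Real.exp ((μS - μF + (1 - r) * ρ * k) * τ) - Real.exp ((μS - μM) * τ)) * v n
          ≤ (r * ρ * (1 - k) / (μM - μF + (1 - r) * ρ * k))
          * (Real.exp ((μS - μF + (1 - r) * ρ * k) * τ) - Real.exp ((μS - μM) * τ))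
          * (v 0 * θ ^ n) := by
        apply mul_le_mul_of_nonneg_left hv'
        exact hB
      have hK0eq : K0 * θ ^ n = (1 / (γ * τ))
          * (((1 - k) / k) * Real.exp ((μS - μM) * τ) * (w 0 * θ ^ n)
          + (r * ρ * (1 - k) / (μM - μF + (1 - r) * ρ * k))
            * (Real.exp ((μS - μF + (1 - r) * ρ * k) * τ) - Real.exp ((μS - μM) * τ))
            * (v 0 * θ ^ n)) := by
        rw [hK0def]; ring
      rw [hK0eq]
      have := add_le_add t1 t2
      calc Λ n ≤ (1 / (γ * τ)) * (((1 - k) / k) * Real.exp ((μS - μM) * τ) * u n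
          + (r * ρ * (1 - k) / (μM - μF + (1 - r) * ρ * k))
            * (Real.exp ((μS - μF + (1 - r) * ρ * k) * τ) - Real.exp ((μS - μM) * τ)) * v n) := h1
        _ ≤ _ := mul_le_mul_of_nonneg_left this hγτ.le
    have hsum : Summable (fun n : ℕ => K0 * θ ^ n) :=
      (summable_geometric_of_lt_one hθ0.le hθ1).mul_left K0
    exact Summable.of_nonneg_of_le hΛnn hΛle hsum
end
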